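/- arXiv:1908.03389 — 6 statements merged into one kernel-verified Lean document; each statement's English description precedes it below -/
import Mathlib

section
/- Let G = (V,E) be a finite simple graph and let G' be the full subdivision of G. Let (S₁, S₂) be a partition of V such that S₁ and S₂ are both nonempty and the induced subgraphs G[S₁] and G[S₂] are both connected. Define S₁' = S₁ ∪ {v_e : e ∈ E has at least one endpoint in S₁} and S₂' = S₂ ∪ {v_e : e ∈ E has both endpoints in S₂}. Then (S₁', S₂') is a partition of the vertex set of G', the induced subgraphs G'[S₁'] and G'[S₂'] are both connected, and the number of edges of G' with exactly one endpoint in S₁' equals the number of edges of G with exactly one endpoint in S₁. -/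
/-- The set of edges of `G` having exactly one endpoint in `S` (the cutset `δ(S)`). -/
def cutEdges {V : Type*} (G : SimpleGraph V) (S : Set V) : Set (Sym2 V) :=
  {e | e ∈ G.edgeSet ∧ ∃ u ∈ S, ∃ v, v ∉ S ∧ e = s(u, v)}

/-- The full subdivision of `G`: one new vertex `v_e` per edge `e`, adjacent exactly to the
two endpoints of `e`. -/
def fullSubdivision {V : Type*} (G : SimpleGraph V) : SimpleGraph (V ⊕ G.edgeSet) :=
  SimpleGraph.fromRel (fun a b =>
    ∃ (u : V) (e : G.edgeSet), a = Sum.inl u ∧ b = Sum.inr e ∧ u ∈ (e : Sym2 V))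

lemma adj_inl_inr {V : Type*} (G : SimpleGraph V) (u : V) (e : G.edgeSet) :
    (fullSubdivision G).Adj (Sum.inl u) (Sum.inr e) ↔ u ∈ (e : Sym2 V) := by
  simp [fullSubdivision, SimpleGraph.fromRel_adj]

lemma mem_edgeSet_fullSub {V : Type*} (G : SimpleGraph V) (f : Sym2 (V ⊕ G.edgeSet)) :
    f ∈ (fullSubdivision G).edgeSet ↔
      ∃ (u : V) (e : G.edgeSet), u ∈ (e : Sym2 V) ∧ f = s(Sum.inl u, Sum.inr e) := by
  induction f using Sym2.ind with
  | _ a b =>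
    rw [SimpleGraph.mem_edgeSet]
    simp only [fullSubdivision, SimpleGraph.fromRel_adj, Sym2.eq_iff]
    constructor
    · rintro ⟨hne, ⟨u, e, rfl, rfl, hm⟩ | ⟨u, e, rfl, rfl, hm⟩⟩
      · exact ⟨u, e, hm, Or.inl ⟨rfl, rfl⟩⟩
      · exact ⟨u, e, hm, Or.inr ⟨rfl, rfl⟩⟩
    · rintro ⟨u, e, hm, ⟨rfl, rfl⟩ | ⟨rfl, rfl⟩⟩
      · exact ⟨by simp, Or.inl ⟨u, e, rfl, rfl, hm⟩⟩
      · exact ⟨by simp, Or.inr ⟨u, e, rfl, rfl, hm⟩⟩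

lemma reach_aux {V : Type*} (G : SimpleGraph V) (S : Set V) (S' : Set (V ⊕ G.edgeSet))
    (hS : ∀ u ∈ S, Sum.inl u ∈ S')
    (hE : ∀ e : G.edgeSet, (∀ x ∈ (e : Sym2 V), x ∈ S) → Sum.inr e ∈ S') :
    ∀ (x y : S), (G.induce S).Reachable x y →
      ((fullSubdivision G).induce S').Reachable ⟨Sum.inl x.1, hS x.1 x.2⟩
        ⟨Sum.inl y.1, hS y.1 y.2⟩ := by
  intro x y h
  obtain ⟨w⟩ := h
  induction w with
  | nil => exact SimpleGraph.Reachable.refl _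
  | @cons a z c h p ih =>
    have hadj : G.Adj a.1 z.1 := h
    set e : G.edgeSet := ⟨s(a.1, z.1), hadj⟩ with he
    have hall : ∀ x ∈ (e : Sym2 V), x ∈ S := by
      intro x hx
      rcases Sym2.mem_iff.mp hx with rfl | rfl
      · exact a.2
      · exact z.2
    have hmem : Sum.inr e ∈ S' := hE e hall
    have h1 : ((fullSubdivision G).induce S').Adj ⟨Sum.inl a.1, hS a.1 a.2⟩ ⟨Sum.inr e, hmem⟩ :=
      (adj_inl_inr G a.1 e).mpr (by rw [he]; exact Sym2.mem_mk_left _ _)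
    have h2 : ((fullSubdivision G).induce S').Adj ⟨Sum.inl z.1, hS z.1 z.2⟩ ⟨Sum.inr e, hmem⟩ :=
      (adj_inl_inr G z.1 e).mpr (by rw [he]; exact Sym2.mem_mk_right _ _)
    exact (h1.reachable.trans h2.symm.reachable).trans ih

theorem stmt0 {V : Type*} [Fintype V] (G : SimpleGraph V) (S₁ S₂ : Set V)
    (hunion : S₁ ∪ S₂ = Set.univ) (hdisj : S₁ ∩ S₂ = ∅)
    (hne₁ : S₁.Nonempty) (hne₂ : S₂.Nonempty)
    (hc₁ : (G.induce S₁).Connected) (hc₂ : (G.induce S₂).Connected)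
    (S₁' S₂' : Set (V ⊕ G.edgeSet))
    (hS₁' : S₁' = Sum.inl '' S₁ ∪
      Sum.inr '' {e : G.edgeSet | ∃ u ∈ S₁, u ∈ (e : Sym2 V)})
    (hS₂' : S₂' = Sum.inl '' S₂ ∪
      Sum.inr '' {e : G.edgeSet | ∀ u, u ∈ (e : Sym2 V) → u ∈ S₂}) :
    S₁' ∪ S₂' = Set.univ ∧ S₁' ∩ S₂' = ∅ ∧
      ((fullSubdivision G).induce S₁').Connected ∧
      ((fullSubdivision G).induce S₂').Connected ∧
      (cutEdges (fullSubdivision G) S₁').ncard = (cutEdges G S₁).ncard := by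
  classical
  have mem1l : ∀ v : V, Sum.inl v ∈ S₁' ↔ v ∈ S₁ := by intro v; simp [hS₁']
  have mem1r : ∀ e : G.edgeSet, Sum.inr e ∈ S₁' ↔ ∃ u ∈ S₁, u ∈ (e : Sym2 V) := by
    intro e; simp [hS₁']
  have mem2l : ∀ v : V, Sum.inl v ∈ S₂' ↔ v ∈ S₂ := by intro v; simp [hS₂']
  have mem2r : ∀ e : G.edgeSet, Sum.inr e ∈ S₂' ↔ ∀ u ∈ (e : Sym2 V), u ∈ S₂ := by
    intro e; simp [hS₂']
  have hcompl : ∀ v : V, v ∉ S₁ ↔ v ∈ S₂ := by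
    intro v
    constructor
    · intro hv
      rcases Set.eq_univ_iff_forall.mp hunion v with h | h
      · exact absurd h hv
      · exact h
    · intro hv hv1
      exact Set.eq_empty_iff_forall_notMem.mp hdisj v ⟨hv1, hv⟩
  have hS : ∀ u ∈ S₁, Sum.inl u ∈ S₁' := fun u hu => (mem1l u).mpr hu
  have hE : ∀ e : G.edgeSet, (∀ x ∈ (e : Sym2 V), x ∈ S₁) → Sum.inr e ∈ S₁' := by
    intro e he
    exact (mem1r e).mpr ⟨(e : Sym2 V).out.1, he _ (Sym2.out_fst_mem _), Sym2.out_fst_mem _⟩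
  have hS2 : ∀ u ∈ S₂, Sum.inl u ∈ S₂' := fun u hu => (mem2l u).mpr hu
  have hE2 : ∀ e : G.edgeSet, (∀ x ∈ (e : Sym2 V), x ∈ S₂) → Sum.inr e ∈ S₂' :=
    fun e he => (mem2r e).mpr he
  refine ⟨?_, ?_, ?_, ?_, ?_⟩
  · -- union
    apply Set.eq_univ_iff_forall.mpr
    rintro (v | e)
    · rcases Set.eq_univ_iff_forall.mp hunion v with h | h
      · exact Or.inl ((mem1l v).mpr h)
      · exact Or.inr ((mem2l v).mpr h)
    · by_cases h : ∃ u ∈ S₁, u ∈ (e : Sym2 V)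
      · exact Or.inl ((mem1r e).mpr h)
      · refine Or.inr ((mem2r e).mpr ?_)
        intro u hu
        by_contra hu2
        have : u ∈ S₁ := by
          by_contra h1
          exact hu2 ((hcompl u).mp h1)
        exact h ⟨u, this, hu⟩
  · -- disjoint
    apply Set.eq_empty_iff_forall_notMem.mpr
    rintro (v | e) ⟨h1, h2⟩
    · exact Set.eq_empty_iff_forall_notMem.mp hdisj v ⟨(mem1l v).mp h1, (mem2l v).mp h2⟩
    · obtain ⟨u, hu1, hue⟩ := (mem1r e).mp h1
      exact Set.eq_empty_iff_forall_notMem.mp hdisj u ⟨hu1, (mem2r e).mp h2 u hue⟩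
  · -- S₁' connected
    rw [SimpleGraph.connected_iff]
    constructor
    · intro x y
      have key : ∀ a : S₁', ∃ (u : V) (hu : u ∈ S₁),
          ((fullSubdivision G).induce S₁').Reachable a ⟨Sum.inl u, hS u hu⟩ := by
        rintro ⟨(v | e), ha⟩
        · exact ⟨v, (mem1l v).mp ha, SimpleGraph.Reachable.refl _⟩
        · obtain ⟨u, hu, hue⟩ := (mem1r e).mp ha
          refine ⟨u, hu, SimpleGraph.Adj.reachable ?_⟩
          exact ((adj_inl_inr G u e).mpr hue).symm
      obtain ⟨u, hu, hx⟩ := key x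
      obtain ⟨v, hv, hy⟩ := key y
      exact hx.trans ((reach_aux G S₁ S₁' hS hE ⟨u, hu⟩ ⟨v, hv⟩
        (hc₁.preconnected _ _)).trans hy.symm)
    · exact ⟨⟨Sum.inl hne₁.some, hS _ hne₁.some_mem⟩⟩
  · -- S₂' connected
    rw [SimpleGraph.connected_iff]
    constructor
    · intro x y
      have key : ∀ a : S₂', ∃ (u : V) (hu : u ∈ S₂),
          ((fullSubdivision G).induce S₂').Reachable a ⟨Sum.inl u, hS2 u hu⟩ := by
        rintro ⟨(v | e), ha⟩
        · exact ⟨v, (mem2l v).mp ha, SimpleGraph.Reachable.refl _⟩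
        · have hall := (mem2r e).mp ha
          refine ⟨(e : Sym2 V).out.1, hall _ (Sym2.out_fst_mem _),
            SimpleGraph.Adj.reachable ?_⟩
          exact ((adj_inl_inr G _ e).mpr (Sym2.out_fst_mem _)).symm
      obtain ⟨u, hu, hx⟩ := key x
      obtain ⟨v, hv, hy⟩ := key y
      exact hx.trans ((reach_aux G S₂ S₂' hS2 hE2 ⟨u, hu⟩ ⟨v, hv⟩
        (hc₂.preconnected _ _)).trans hy.symm)
    · exact ⟨⟨Sum.inl hne₂.some, hS2 _ hne₂.some_mem⟩⟩
  · -- cut edge count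
    obtain ⟨v₀, hv₀⟩ := hne₁
    set h : Sym2 (V ⊕ G.edgeSet) → Sym2 V := fun f =>
      if hf : ∃ e : G.edgeSet, Sum.inr e ∈ f then (hf.choose : Sym2 V) else s(v₀, v₀)
      with hdef
    have hval : ∀ (u : V) (e : G.edgeSet), h s(Sum.inl u, Sum.inr e) = (e : Sym2 V) := by
      intro u e
      have hf : ∃ e' : G.edgeSet, Sum.inr e' ∈ s(Sum.inl u, Sum.inr e) :=
        ⟨e, Sym2.mem_mk_right _ _⟩
      rw [hdef]
      simp only
      rw [dif_pos hf]
      rcases Sym2.mem_iff.mp hf.choose_spec with h1 | h1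
      · exact absurd h1 (by simp)
      · rw [Sum.inr.inj h1]
    have decomp : ∀ f ∈ cutEdges (fullSubdivision G) S₁',
        ∃ (u : V) (e : G.edgeSet), u ∈ (e : Sym2 V) ∧ u ∉ S₁ ∧
          (∃ x ∈ S₁, x ∈ (e : Sym2 V)) ∧ f = s(Sum.inl u, Sum.inr e) := by
      rintro f ⟨hfe, a, ha, b, hb, rfl⟩
      obtain ⟨u, e, hue, hform⟩ := (mem_edgeSet_fullSub G _).mp hfe
      rcases Sym2.eq_iff.mp hform with ⟨h1, h2⟩ | ⟨h1, h2⟩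
      · -- a = inl u, b = inr e : impossible since then b ∈ S₁'
        subst h1; subst h2
        exact absurd ((mem1r e).mpr ⟨u, (mem1l u).mp ha, hue⟩) hb
      · -- a = inr e, b = inl u
        subst h1; subst h2
        exact ⟨u, e, hue, fun hu => hb ((mem1l u).mpr hu), (mem1r e).mp ha, Sym2.eq_swap⟩
    have hbij : Set.BijOn h (cutEdges (fullSubdivision G) S₁') (cutEdges G S₁) := by
      refine ⟨?_, ?_, ?_⟩
      · intro f hf
        obtain ⟨u, e, hue, hu, ⟨x, hx, hxe⟩, rfl⟩ := decomp f hf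
        rw [hval]
        have hxu : x ≠ u := fun hh => hu (hh ▸ hx)
        have hee : (e : Sym2 V) = s(x, u) := (Sym2.mem_and_mem_iff hxu).mp ⟨hxe, hue⟩
        exact ⟨e.2, x, hx, u, hu, hee⟩
      · intro f1 hf1 f2 hf2 heq
        obtain ⟨u1, e1, hue1, hu1, ⟨x1, hx1, hxe1⟩, rfl⟩ := decomp f1 hf1
        obtain ⟨u2, e2, hue2, hu2, ⟨x2, hx2, hxe2⟩, rfl⟩ := decomp f2 hf2
        rw [hval, hval] at heq
        have he : e1 = e2 := Subtype.ext heq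
        subst he
        have huu : u1 = u2 := by
          by_contra hne
          have hes : (e1 : Sym2 V) = s(u1, u2) :=
            (Sym2.mem_and_mem_iff hne).mp ⟨hue1, hue2⟩
          rcases Sym2.mem_iff.mp (hes ▸ hxe1) with rfl | rfl
          · exact hu1 hx1
          · exact hu2 hx1
        rw [huu]
      · intro e he
        obtain ⟨hee, x, hx, u, hu, hform⟩ := he
        have hadj : G.Adj x u := by
          rw [← SimpleGraph.mem_edgeSet, ← hform]; exact hee
        set ee : G.edgeSet := ⟨e, hee⟩ with heedef
        have huee : u ∈ (ee : Sym2 V) := by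
          rw [heedef]; simp only; rw [hform]; exact Sym2.mem_mk_right _ _
        have hxee : x ∈ (ee : Sym2 V) := by
          rw [heedef]; simp only; rw [hform]; exact Sym2.mem_mk_left _ _
        refine ⟨s(Sum.inl u, Sum.inr ee), ⟨?_, ?_⟩, ?_⟩
        · exact (mem_edgeSet_fullSub G _).mpr ⟨u, ee, huee, rfl⟩
        · exact ⟨Sum.inr ee, (mem1r ee).mpr ⟨x, hx, hxee⟩, Sum.inl u,
            fun hc => hu ((mem1l u).mp hc), Sym2.eq_swap⟩
        · rw [hval]
    rw [← hbij.image_eq, Set.ncard_image_of_injOn hbij.injOn]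
end

section
/- Let G = (V,E) be a finite simple graph with |V| = n ≥ 2, and let G' be the split augmentation of G with n³ edge-copies. Let (S₁, S₂) be a partition of V with S₁ and S₂ both nonempty. Define S₂' = S₂ ∪ {(e,ℓ) : e ∈ E has both endpoints in S₂, 1 ≤ ℓ ≤ n³} and S₁' = the complement of S₂' in the vertex set of G'. Then the induced subgraphs G'[S₁'] and G'[S₂'] are both connected, and the number of edges of G' with exactly one endpoint in S₁' equals n³·c + |S₁|·|S₂|, where c is the number of edges of G with exactly one endpoint in S₁. -/
/-- The split augmentation of `G` with `n³` edge-copies (`n = |V|`): the original vertices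
form a clique, each copy `(e, ℓ)` of an edge `e` is adjacent exactly to the two endpoints
of `e`, and the edge-copies form an independent set. -/
def splitAug {V : Type*} [Fintype V] (G : SimpleGraph V) :
    SimpleGraph (V ⊕ (G.edgeSet × Fin ((Fintype.card V) ^ 3))) :=
  SimpleGraph.fromRel (fun a b =>
    (∃ u v : V, a = Sum.inl u ∧ b = Sum.inl v) ∨
    (∃ (u : V) (p : G.edgeSet × Fin ((Fintype.card V) ^ 3)),
      a = Sum.inl u ∧ b = Sum.inr p ∧ u ∈ (p.1 : Sym2 V)))

section Aux
variable {V : Type*} [Fintype V] (G : SimpleGraph V)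

lemma adj_ll (u v : V) : (splitAug G).Adj (Sum.inl u) (Sum.inl v) ↔ u ≠ v := by
  simp [splitAug, SimpleGraph.fromRel_adj]

lemma adj_lr (u : V) (p : G.edgeSet × Fin ((Fintype.card V) ^ 3)) :
    (splitAug G).Adj (Sum.inl u) (Sum.inr p) ↔ u ∈ (p.1 : Sym2 V) := by
  simp only [splitAug, SimpleGraph.fromRel_adj]
  constructor
  · rintro ⟨-, (⟨a, b, -, hb⟩ | ⟨a, q, ha, hq, hm⟩) | (⟨a, b, ha, -⟩ | ⟨a, q, ha, -⟩)⟩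
    · exact absurd hb (by simp)
    · obtain rfl : q = p := (Sum.inr.inj hq).symm
      obtain rfl : a = u := (Sum.inl.inj ha).symm
      exact hm
    · exact absurd ha (by simp)
    · exact absurd ha (by simp)
  · intro h
    exact ⟨by simp, Or.inl (Or.inr ⟨u, p, rfl, rfl, h⟩)⟩

lemma adj_rr (p q : G.edgeSet × Fin ((Fintype.card V) ^ 3)) :
    ¬ (splitAug G).Adj (Sum.inr p) (Sum.inr q) := by
  simp [splitAug, SimpleGraph.fromRel_adj]

lemma ncard_prod' {α β : Type*} (s : Set α) (t : Set β) :
    (s ×ˢ t).ncard = s.ncard * t.ncard := by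
  rw [← Nat.card_coe_set_eq, ← Nat.card_coe_set_eq, ← Nat.card_coe_set_eq,
    Nat.card_congr (Equiv.Set.prod s t), Nat.card_prod]

lemma induce_connected_aux (S : Set (V ⊕ (G.edgeSet × Fin ((Fintype.card V) ^ 3))))
    (hV : ∃ a, Sum.inl a ∈ S)
    (hr : ∀ p, Sum.inr p ∈ S → ∃ u, u ∈ (p.1 : Sym2 V) ∧ Sum.inl u ∈ S) :
    ((splitAug G).induce S).Connected := by
  obtain ⟨a₀, ha₀⟩ := hV
  have keyl : ∀ u (hu : Sum.inl u ∈ S),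
      ((splitAug G).induce S).Reachable ⟨Sum.inl u, hu⟩ ⟨Sum.inl a₀, ha₀⟩ := by
    intro u hu
    by_cases h : u = a₀
    · subst h; exact SimpleGraph.Reachable.refl _
    · exact SimpleGraph.Adj.reachable ((adj_ll G u a₀).mpr h)
  have keyr : ∀ p (hp : Sum.inr p ∈ S),
      ((splitAug G).induce S).Reachable ⟨Sum.inr p, hp⟩ ⟨Sum.inl a₀, ha₀⟩ := by
    intro p hp
    obtain ⟨u, hu, huS⟩ := hr p hp
    have hadj : ((splitAug G).induce S).Adj ⟨Sum.inr p, hp⟩ ⟨Sum.inl u, huS⟩ :=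
      ((adj_lr G u p).mpr hu).symm
    exact hadj.reachable.trans (keyl u huS)
  have key : ∀ x : S, ((splitAug G).induce S).Reachable x ⟨Sum.inl a₀, ha₀⟩ := by
    rintro ⟨(u | p), hx⟩
    · exact keyl u hx
    · exact keyr p hx
  rw [SimpleGraph.connected_iff]
  exact ⟨fun x y => (key x).trans (key y).symm, ⟨⟨Sum.inl a₀, ha₀⟩⟩⟩

end Aux

theorem stmt2 {V : Type*} [Fintype V] (G : SimpleGraph V)
    (hn : 2 ≤ Fintype.card V)
    (S₁ S₂ : Set V) (hunion : S₁ ∪ S₂ = Set.univ) (hdisj : S₁ ∩ S₂ = ∅)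
    (hne₁ : S₁.Nonempty) (hne₂ : S₂.Nonempty)
    (S₁' S₂' : Set (V ⊕ (G.edgeSet × Fin ((Fintype.card V) ^ 3))))
    (hS₂' : S₂' = Sum.inl '' S₂ ∪
      Sum.inr '' {p : G.edgeSet × Fin ((Fintype.card V) ^ 3) |
        ∀ u, u ∈ (p.1 : Sym2 V) → u ∈ S₂})
    (hS₁' : S₁' = S₂'ᶜ) :
    ((splitAug G).induce S₁').Connected ∧ ((splitAug G).induce S₂').Connected ∧
      (cutEdges (splitAug G) S₁').ncard =
        (Fintype.card V) ^ 3 * (cutEdges G S₁).ncard + S₁.ncard * S₂.ncard := by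
  classical
  have hdisj' : ∀ u : V, u ∈ S₁ → u ∈ S₂ → False := by
    intro u h1 h2
    have : u ∈ S₁ ∩ S₂ := ⟨h1, h2⟩
    rw [hdisj] at this
    exact this
  have hmem : ∀ u : V, u ∉ S₂ ↔ u ∈ S₁ := by
    intro u
    constructor
    · intro h
      have hu : u ∈ S₁ ∪ S₂ := hunion ▸ Set.mem_univ u
      rcases hu with h1 | h2
      · exact h1
      · exact absurd h2 h
    · intro h1 h2
      exact hdisj' u h1 h2
  have mem2l : ∀ u, Sum.inl u ∈ S₂' ↔ u ∈ S₂ := by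
    intro u; rw [hS₂']; simp
  have mem2r : ∀ p, Sum.inr p ∈ S₂' ↔ ∀ u ∈ (p.1 : Sym2 V), u ∈ S₂ := by
    intro p; rw [hS₂']; simp
  have mem1l : ∀ u, Sum.inl u ∈ S₁' ↔ u ∈ S₁ := by
    intro u; rw [hS₁', Set.mem_compl_iff, mem2l]; exact hmem u
  have mem1r : ∀ p, Sum.inr p ∈ S₁' ↔ ∃ u ∈ (p.1 : Sym2 V), u ∈ S₁ := by
    intro p
    rw [hS₁', Set.mem_compl_iff, mem2r]
    push_neg
    constructor
    · rintro ⟨u, hu, hn2⟩; exact ⟨u, hu, (hmem u).mp hn2⟩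
    · rintro ⟨u, hu, h1⟩; exact ⟨u, hu, fun h2 => hdisj' u h1 h2⟩
  obtain ⟨a₁, ha₁⟩ := hne₁
  obtain ⟨a₂, ha₂⟩ := hne₂
  refine ⟨induce_connected_aux G S₁' ⟨a₁, (mem1l a₁).mpr ha₁⟩ ?_,
          induce_connected_aux G S₂' ⟨a₂, (mem2l a₂).mpr ha₂⟩ ?_, ?_⟩
  · intro p hp
    obtain ⟨u, hu, h1⟩ := (mem1r p).mp hp
    exact ⟨u, hu, (mem1l u).mpr h1⟩
  · intro p hp
    have hall := (mem2r p).mp hp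
    have hex : ∃ x, x ∈ (p.1 : Sym2 V) := by
      induction (p.1 : Sym2 V) using Sym2.ind with
      | _ x y => exact ⟨x, Sym2.mem_mk_left x y⟩
    obtain ⟨x, hx⟩ := hex
    exact ⟨x, hx, (mem2l x).mpr (hall x hx)⟩
  -- counting
  · have hwit : ∀ e : Sym2 V, ∃ v : V, e ∈ cutEdges G S₁ →
        v ∈ S₂ ∧ v ∈ e ∧ ∀ v', v' ∈ S₂ → v' ∈ e → v' = v := by
      intro e
      by_cases he : e ∈ cutEdges G S₁
      · obtain ⟨hes, u, hu, v, hv, rfl⟩ := he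
        refine ⟨v, fun _ => ⟨?_, Sym2.mem_mk_right u v, ?_⟩⟩
        · by_contra h
          exact hv ((hmem v).mp h)
        · intro v' h2 hm
          rcases Sym2.mem_iff.mp hm with rfl | rfl
          · exact ((hdisj' v' hu h2)).elim
          · rfl
      · exact ⟨a₂, fun h => absurd h he⟩
    choose w hw using hwit
    set f : Sym2 V × Fin ((Fintype.card V) ^ 3) →
        Sym2 (V ⊕ (G.edgeSet × Fin ((Fintype.card V) ^ 3))) := fun q =>
      if h : q.1 ∈ G.edgeSet then
        s(Sum.inl (w q.1), Sum.inr ((⟨q.1, h⟩ : G.edgeSet), q.2))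
      else s(Sum.inl a₁, Sum.inl a₁) with hf
    set A : Set (Sym2 (V ⊕ (G.edgeSet × Fin ((Fintype.card V) ^ 3)))) :=
      {d | ∃ p : G.edgeSet × Fin ((Fintype.card V) ^ 3), ↑p.1 ∈ cutEdges G S₁ ∧
        ∃ v ∈ S₂, v ∈ (p.1 : Sym2 V) ∧ d = s(Sum.inl v, Sum.inr p)} with hA
    set B : Set (Sym2 (V ⊕ (G.edgeSet × Fin ((Fintype.card V) ^ 3)))) :=
      {d | ∃ u ∈ S₁, ∃ v ∈ S₂, d = s(Sum.inl u, Sum.inl v)} with hB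
    have hcut : cutEdges (splitAug G) S₁' = A ∪ B := by
      ext d
      constructor
      · rintro ⟨hd, x, hx, y, hy, rfl⟩
        have hadj : (splitAug G).Adj x y := ((splitAug G).mem_edgeSet).mp hd
        rcases x with u | p <;> rcases y with v | q
        · refine Or.inr ⟨u, (mem1l u).mp hx, v, ?_, rfl⟩
          by_contra h
          exact hy ((mem1l v).mpr ((hmem v).mp h))
        · have hu : u ∈ S₁ := (mem1l u).mp hx
          have hq : ∀ z ∈ (q.1 : Sym2 V), z ∈ S₂ := by
            have h2 := hy
            rw [hS₁', Set.mem_compl_iff, not_not] at h2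
            exact (mem2r q).mp h2
          exact ((hdisj' u hu (hq u ((adj_lr G u q).mp hadj)))).elim
        · have hv2 : v ∈ S₂ := by
            by_contra h
            exact hy ((mem1l v).mpr ((hmem v).mp h))
          have hvp : v ∈ (p.1 : Sym2 V) := (adj_lr G v p).mp hadj.symm
          obtain ⟨z, hz, hz1⟩ := (mem1r p).mp hx
          have hzv : z ≠ v := fun h => hdisj' v (h ▸ hz1) hv2
          have hep : (p.1 : Sym2 V) = s(z, v) :=
            (Sym2.mem_and_mem_iff hzv).mp ⟨hz, hvp⟩
          exact Or.inl ⟨p, ⟨p.1.2, z, hz1, v, fun h => hdisj' v h hv2, hep⟩,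
            v, hv2, hvp, Sym2.eq_swap⟩
        · exact (adj_rr G p q hadj).elim
      · rintro (⟨p, hpE, v, hv2, hvp, rfl⟩ | ⟨u, hu1, v, hv2, rfl⟩)
        · obtain ⟨hes, z, hz1, z', hz', hez⟩ := hpE
          have hz : z ∈ (p.1 : Sym2 V) := by
            rw [hez]; exact Sym2.mem_mk_left _ _
          refine ⟨((splitAug G).mem_edgeSet).mpr ((adj_lr G v p).mpr hvp),
            Sum.inr p, (mem1r p).mpr ⟨z, hz, hz1⟩, Sum.inl v, ?_, Sym2.eq_swap⟩
          rw [mem1l]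
          exact fun h => hdisj' v h hv2
        · refine ⟨((splitAug G).mem_edgeSet).mpr ((adj_ll G u v).mpr
            (fun h => hdisj' u hu1 (h ▸ hv2))),
            Sum.inl u, (mem1l u).mpr hu1, Sum.inl v, ?_, rfl⟩
          rw [mem1l]
          exact fun h => hdisj' v h hv2
    have hAB : Disjoint A B := by
      rw [Set.disjoint_left]
      rintro d ⟨p, -, v, -, -, rfl⟩ ⟨u, -, v', -, heq⟩
      rw [Sym2.eq_iff] at heq
      rcases heq with ⟨-, h⟩ | ⟨-, h⟩ <;> simp at h
    have hBcard : B.ncard = S₁.ncard * S₂.ncard := by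
      have himB : B = (fun q : V × V => s(Sum.inl q.1, Sum.inl q.2)) '' (S₁ ×ˢ S₂) := by
        ext d
        constructor
        · rintro ⟨u, hu, v, hv, rfl⟩; exact ⟨(u, v), ⟨hu, hv⟩, rfl⟩
        · rintro ⟨⟨u, v⟩, ⟨hu, hv⟩, rfl⟩; exact ⟨u, hu, v, hv, rfl⟩
      rw [himB, Set.ncard_image_of_injOn, ncard_prod']
      rintro ⟨u, v⟩ ⟨hu, hv⟩ ⟨u', v'⟩ ⟨hu', hv'⟩ h
      simp only [Sym2.eq_iff, Sum.inl.injEq] at h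
      rcases h with ⟨rfl, rfl⟩ | ⟨rfl, rfl⟩
      · rfl
      · exact ((hdisj' u hu hv')).elim
    have hAcard : A.ncard = (Fintype.card V) ^ 3 * (cutEdges G S₁).ncard := by
      have hAim : A = f '' ((cutEdges G S₁) ×ˢ
          (Set.univ : Set (Fin ((Fintype.card V) ^ 3)))) := by
        ext d
        constructor
        · rintro ⟨p, hpE, v, hv2, hvp, rfl⟩
          refine ⟨(↑p.1, p.2), ⟨hpE, Set.mem_univ _⟩, ?_⟩
          rw [hf]
          simp only
          rw [dif_pos p.1.2]
          have hwv : v = w ↑p.1 := (hw ↑p.1 hpE).2.2 v hv2 hvp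
          rw [← hwv]
        · rintro ⟨⟨e, ℓ⟩, ⟨heE, -⟩, rfl⟩
          have he : e ∈ G.edgeSet := heE.1
          refine ⟨((⟨e, he⟩ : G.edgeSet), ℓ), heE, w e, (hw e heE).1, (hw e heE).2.1, ?_⟩
          rw [hf]
          simp only
          rw [dif_pos he]
      rw [hAim, Set.ncard_image_of_injOn, ncard_prod', Set.ncard_univ,
        Nat.card_eq_fintype_card, Fintype.card_fin, mul_comm]
      rintro ⟨e, ℓ⟩ ⟨heE, -⟩ ⟨e', ℓ'⟩ ⟨heE', -⟩ h
      rw [hf] at h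
      simp only at h
      rw [dif_pos heE.1, dif_pos heE'.1] at h
      simp only [Sym2.eq_iff, Sum.inl.injEq, Sum.inr.injEq, Prod.mk.injEq,
        Subtype.mk.injEq, reduceCtorEq, and_false, false_and, or_false] at h
      obtain ⟨-, he, hℓ⟩ := h
      simp [he, hℓ]
    rw [hcut, Set.ncard_union_eq hAB (Set.toFinite A) (Set.toFinite B), hAcard, hBcard]
end

section
/- Let G = (V,E) be a finite simple graph with |V| = n ≥ 2, let G' be the split augmentation of G with n³ edge-copies, and let k be an integer with k > 2. Then G has a cut of size at least k (i.e., some S ⊆ V such that at least k edges of G have exactly one endpoint in S) if and only if there exists a partition (S₁', S₂') of the vertex set of G' with S₁' and S₂' nonempty, G'[S₁'] and G'[S₂'] both connected, and at least k·n³ edges of G' having exactly one endpoint in S₁'. -/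
/-!
Call `T ⊆ V(G')` anchored if every edge-copy `(e, ℓ)` lies on the same side of `T` as some
endpoint of `e`. If both sides of `T` induce connected subgraphs and the cut has more than two
edges, `T` is anchored: a copy with no endpoint on its side would be isolated there, so its side
would be a singleton, whose cut has at most two edges. For an anchored `T` and `S = V ∩ T`, a copy
of `e` crosses the cut along exactly one edge if `e ∈ δ(S)` and along none otherwise, so
`|δ_{G'}(T)| ≤ n² + |δ(S)| · n³`, and `n² < n³` turns `k · n³ ≤ |δ_{G'}(T)|` into `k ≤ |δ(S)|`.
Conversely, placing each copy on the side of `S` exactly when both endpoints of its edge are in `S`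
gives an anchored set, both sides are connected through the clique `V`, and each of the
`|δ(S)| · n³` copies of crossing edges contributes a cut edge of `G'`.
-/
open SimpleGraph

section Cut

variable {W : Type*} (H : SimpleGraph W) (T : Set W)

lemma mk_mem_cutEdges_iff {a b : W} :
    s(a, b) ∈ cutEdges H T ↔ H.Adj a b ∧ (a ∈ T ↔ b ∉ T) := by
  constructor
  · rintro ⟨he, u, hu, v, hv, huv⟩
    rcases Sym2.eq_iff.1 huv with ⟨rfl, rfl⟩ | ⟨rfl, rfl⟩
    · exact ⟨he, iff_of_true hu hv⟩
    · exact ⟨he, iff_of_false hv (not_not_intro hu)⟩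
  · rintro ⟨hab, hT⟩
    by_cases ha : a ∈ T
    · exact ⟨hab, a, ha, b, hT.1 ha, rfl⟩
    · exact ⟨hab, b, not_not.1 (mt hT.2 ha), a, ha, Sym2.eq_swap⟩

lemma cutEdges_compl : cutEdges H Tᶜ = cutEdges H T := by
  ext e
  induction e using Sym2.ind with
  | _ a b => simp only [mk_mem_cutEdges_iff, Set.mem_compl_iff, not_not]; tauto

lemma cutEdges_singleton (x : W) :
    cutEdges H {x} = (fun y => s(x, y)) '' H.neighborSet x := by
  ext e
  induction e using Sym2.ind with
  | _ a b =>
    simp only [mk_mem_cutEdges_iff, Set.mem_singleton_iff, Set.mem_image, mem_neighborSet]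
    constructor
    · rintro ⟨hab, hx⟩
      by_cases ha : a = x
      · subst ha; exact ⟨b, hab, rfl⟩
      · obtain rfl := not_not.1 (mt hx.2 ha)
        exact ⟨a, hab.symm, Sym2.eq_swap⟩
    · rintro ⟨y, hy, hxy⟩
      rcases Sym2.eq_iff.1 hxy with ⟨rfl, rfl⟩ | ⟨rfl, rfl⟩
      · exact ⟨hy, iff_of_true rfl hy.ne.symm⟩
      · exact ⟨hy.symm, iff_of_false hy.ne.symm (not_not_intro rfl)⟩

lemma eq_singleton_of_connected_induce {x : W} (hT : (H.induce T).Connected) (hx : x ∈ T)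
    (hnadj : ∀ y ∈ T, ¬ H.Adj x y) : T = {x} := by
  refine Set.eq_singleton_iff_unique_mem.2 ⟨hx, fun y hy => ?_⟩
  by_contra hne
  obtain ⟨p⟩ := hT.preconnected ⟨x, hx⟩ ⟨y, hy⟩
  have hp := p.adj_snd (p.not_nil_of_ne fun h => hne (congrArg Subtype.val h).symm)
  exact hnadj _ p.snd.2 hp

end Cut

section Crossings

variable {α β : Type*} (H : SimpleGraph (α ⊕ β)) (T : Set (α ⊕ β))

def crossings : Set (α × β) := {x | s(Sum.inl x.1, Sum.inr x.2) ∈ cutEdges H T}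

variable [Finite α] [Finite β]

lemma ncard_crossings_le_ncard_cutEdges :
    (crossings H T).ncard ≤ (cutEdges H T).ncard := by
  refine Set.ncard_le_ncard_of_injOn (fun x => s(Sum.inl x.1, Sum.inr x.2)) (fun x hx => hx)
    ?_ (Set.toFinite _)
  rintro ⟨a, b⟩ - ⟨a', b'⟩ - h
  rcases Sym2.eq_iff.1 h with ⟨ha, hb⟩ | ⟨ha, -⟩
  · exact Prod.ext (Sum.inl_injective ha) (Sum.inr_injective hb)
  · exact absurd ha Sum.inl_ne_inr

lemma ncard_cutEdges_le_of_forall_not_adj_inr (hβ : ∀ p q, ¬ H.Adj (Sum.inr p) (Sum.inr q)) :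
    (cutEdges H T).ncard ≤ Nat.card α ^ 2 + (crossings H T).ncard := by
  have hsub : cutEdges H T ⊆ (fun x : α × α => s(Sum.inl x.1, Sum.inl x.2)) '' Set.univ ∪
      (fun x : α × β => s(Sum.inl x.1, Sum.inr x.2)) '' crossings H T := by
    intro e he
    induction e using Sym2.ind with
    | _ a b =>
      have hab := ((mk_mem_cutEdges_iff H T).1 he).1
      rcases a with a | p <;> rcases b with b | q
      · exact Or.inl ⟨(a, b), trivial, rfl⟩
      · exact Or.inr ⟨(a, q), he, rfl⟩
      · exact Or.inr ⟨(b, p), by rwa [crossings, Set.mem_ofPred_eq, Sym2.eq_swap], Sym2.eq_swap⟩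
      · exact absurd hab (hβ p q)
  calc (cutEdges H T).ncard
      ≤ ((fun x : α × α => s(Sum.inl x.1, Sum.inl x.2)) '' Set.univ).ncard +
        ((fun x : α × β => s(Sum.inl x.1, Sum.inr x.2)) '' crossings H T).ncard :=
        (Set.ncard_le_ncard hsub (Set.toFinite _)).trans (Set.ncard_union_le _ _)
    _ ≤ (Set.univ : Set (α × α)).ncard + (crossings H T).ncard :=
        add_le_add (Set.ncard_image_le (Set.toFinite _)) (Set.ncard_image_le (Set.toFinite _))
    _ = Nat.card α ^ 2 + (crossings H T).ncard := by
        rw [Set.ncard_univ, Nat.card_prod, sq]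

end Crossings

lemma Sym2.ncard_setOf_mem_le {α : Type*} (z : Sym2 α) : {w | w ∈ z}.ncard ≤ 2 := by
  induction z using Sym2.ind with
  | _ a b =>
    simp only [Sym2.mem_iff, Set.ofPred_or, Set.ofPred_eq_eq_singleton]
    exact (Set.ncard_union_le _ _).trans (by simp)

section SplitAug

variable {V : Type*} [Fintype V]

abbrev EdgeCopy (G : SimpleGraph V) := G.edgeSet × Fin (Fintype.card V ^ 3)

variable {G : SimpleGraph V}

@[simp]
lemma splitAug_adj_inl_inl {u v : V} : (splitAug G).Adj (Sum.inl u) (Sum.inl v) ↔ u ≠ v := by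
  simp [splitAug]

@[simp]
lemma splitAug_adj_inl_inr {u : V} {p : EdgeCopy G} :
    (splitAug G).Adj (Sum.inl u) (Sum.inr p) ↔ u ∈ (p.1 : Sym2 V) := by
  simp only [splitAug, fromRel_adj, ne_eq, reduceCtorEq, not_false_eq_true, Sum.inl.injEq,
    Sum.inr.injEq, false_and, exists_false, or_false, false_or, and_false,
    true_and]
  exact ⟨fun ⟨_, _, rfl, rfl, hu⟩ => hu, fun hu => ⟨u, p, rfl, rfl, hu⟩⟩

@[simp]
lemma splitAug_adj_inr_inl {u : V} {p : EdgeCopy G} :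
    (splitAug G).Adj (Sum.inr p) (Sum.inl u) ↔ u ∈ (p.1 : Sym2 V) :=
  (splitAug G).adj_comm _ _ |>.trans splitAug_adj_inl_inr

@[simp]
lemma splitAug_not_adj_inr_inr (p q : EdgeCopy G) :
    ¬ (splitAug G).Adj (Sum.inr p) (Sum.inr q) := by
  simp [splitAug]

lemma ncard_neighborSet_splitAug_inr_le (p : EdgeCopy G) :
    ((splitAug G).neighborSet (Sum.inr p)).ncard ≤ 2 := by
  have hsub : (splitAug G).neighborSet (Sum.inr p) ⊆ Sum.inl '' {w | w ∈ (p.1 : Sym2 V)} := by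
    rintro (w | q) h
    · exact ⟨w, splitAug_adj_inr_inl.1 h, rfl⟩
    · exact absurd h (splitAug_not_adj_inr_inr p q)
  exact (Set.ncard_le_ncard hsub (Set.toFinite _)).trans
    ((Set.ncard_image_le (Set.toFinite _)).trans (Sym2.ncard_setOf_mem_le _))

lemma ncard_setOf_copy_mem {s : Set (Sym2 V)} (hs : s ⊆ G.edgeSet) :
    {q : EdgeCopy G | (q.1 : Sym2 V) ∈ s}.ncard = s.ncard * Fintype.card V ^ 3 := by
  have hprod : {q : EdgeCopy G | (q.1 : Sym2 V) ∈ s} = (Subtype.val ⁻¹' s) ×ˢ Set.univ := by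
    ext q
    simp
  rw [hprod, Set.ncard_prod, Set.ncard_univ, Nat.card_fin,
    Set.ncard_preimage_of_injective_subset_range Subtype.val_injective (by rwa [Subtype.range_coe])]

def CopiesAnchored (T : Set (V ⊕ EdgeCopy G)) : Prop :=
  ∀ q : EdgeCopy G, ∃ w ∈ (q.1 : Sym2 V), (Sum.inl w ∈ T ↔ Sum.inr q ∈ T)

variable {T : Set (V ⊕ EdgeCopy G)}

lemma CopiesAnchored.connected_induce (hT : CopiesAnchored T) {u : V} (hu : Sum.inl u ∈ T) :
    ((splitAug G).induce T).Connected := by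
  have hinl : ∀ v (hv : Sum.inl v ∈ T), ((splitAug G).induce T).Reachable ⟨_, hu⟩ ⟨_, hv⟩ := by
    intro v hv
    by_cases huv : u = v
    · subst huv; rfl
    · exact Adj.reachable (splitAug_adj_inl_inl.2 huv)
  refine (connected_iff_exists_forall_reachable _).2 ⟨⟨_, hu⟩, ?_⟩
  rintro ⟨w | q, hx⟩
  · exact hinl w hx
  · obtain ⟨w, hw, hwT⟩ := hT q
    exact (hinl w (hwT.2 hx)).trans (Adj.reachable (splitAug_adj_inl_inr.2 hw))

lemma CopiesAnchored.compl (hT : CopiesAnchored T) : CopiesAnchored Tᶜ := fun q =>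
  let ⟨w, hw, hwT⟩ := hT q
  ⟨w, hw, not_congr hwT⟩

lemma exists_endpoint_mem_of_connected (hT : ((splitAug G).induce T).Connected)
    (hcut : 2 < (cutEdges (splitAug G) T).ncard) {p : EdgeCopy G} (hp : Sum.inr p ∈ T) :
    ∃ w ∈ (p.1 : Sym2 V), Sum.inl w ∈ T := by
  by_contra! h
  have hnadj : ∀ y ∈ T, ¬ (splitAug G).Adj (Sum.inr p) y := by
    rintro (w | q) hy hadj
    · exact h w (splitAug_adj_inr_inl.1 hadj) hy
    · exact splitAug_not_adj_inr_inr p q hadj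
  rw [eq_singleton_of_connected_induce _ _ hT hp hnadj, cutEdges_singleton] at hcut
  exact hcut.not_ge
    ((Set.ncard_image_le (Set.toFinite _)).trans (ncard_neighborSet_splitAug_inr_le p))

lemma copiesAnchored_of_connected (h₁ : ((splitAug G).induce T).Connected)
    (h₂ : ((splitAug G).induce Tᶜ).Connected) (hcut : 2 < (cutEdges (splitAug G) T).ncard) :
    CopiesAnchored T := by
  intro q
  by_cases hq : Sum.inr q ∈ T
  · obtain ⟨w, hw, hwT⟩ := exists_endpoint_mem_of_connected h₁ hcut hq
    exact ⟨w, hw, iff_of_true hwT hq⟩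
  · obtain ⟨w, hw, hwT⟩ :=
      exists_endpoint_mem_of_connected h₂ (by rwa [cutEdges_compl]) (Set.mem_compl hq)
    exact ⟨w, hw, iff_of_false hwT hq⟩

lemma CopiesAnchored.ncard_crossings_le (hT : CopiesAnchored T) :
    (crossings (splitAug G) T).ncard ≤
      (cutEdges G (Sum.inl ⁻¹' T)).ncard * Fintype.card V ^ 3 := by
  choose w hw hwT using hT
  have key : ∀ x ∈ crossings (splitAug G) T, (x.2.1 : Sym2 V) = s(x.1, w x.2) ∧
      (Sum.inl x.1 ∈ T ↔ Sum.inl (w x.2) ∉ T) := by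
    rintro ⟨u, q⟩ hx
    obtain ⟨hadj, hside⟩ := (mk_mem_cutEdges_iff _ _).1 hx
    rw [← hwT q] at hside
    have hne : u ≠ w q := by rintro rfl; tauto
    exact ⟨(Sym2.mem_and_mem_iff hne).1 ⟨splitAug_adj_inl_inr.1 hadj, hw q⟩, hside⟩
  rw [← ncard_setOf_copy_mem fun _ he => he.1]
  refine Set.ncard_le_ncard_of_injOn Prod.snd (fun x hx => ?_) (fun x hx y hy hxy => ?_)
    (Set.toFinite _)
  · obtain ⟨he, hside⟩ := key x hx
    have hadj : G.Adj x.1 (w x.2) := by rw [← G.mem_edgeSet, ← he]; exact x.2.1.2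
    show (x.2.1 : Sym2 V) ∈ cutEdges G _
    rw [he, mk_mem_cutEdges_iff]
    exact ⟨hadj, hside⟩
  · have hx' := (key x hx).1
    rw [hxy, (key y hy).1, Sym2.congr_left] at hx'
    exact Prod.ext hx'.symm hxy

def splitAugLift (S : Set V) : Set (V ⊕ EdgeCopy G) :=
  {x | Sum.elim (· ∈ S) (fun q => ∀ w ∈ (q.1 : Sym2 V), w ∈ S) x}

lemma copiesAnchored_splitAugLift (S : Set V) : CopiesAnchored (splitAugLift (G := G) S) := by
  intro q
  by_cases h : ∀ w ∈ (q.1 : Sym2 V), w ∈ S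
  · exact ⟨_, Sym2.out_fst_mem _, iff_of_true (h _ (Sym2.out_fst_mem _)) h⟩
  · obtain ⟨w, hw, hwS⟩ := not_forall₂.1 h
    exact ⟨w, hw, iff_of_false hwS fun h' => hwS (h' w hw)⟩

lemma ncard_cutEdges_mul_le_ncard_crossings_splitAugLift (S : Set V) :
    (cutEdges G S).ncard * Fintype.card V ^ 3 ≤
      (crossings (splitAug G) (splitAugLift S)).ncard := by
  rw [← ncard_setOf_copy_mem fun _ he => he.1]
  refine (Set.ncard_le_ncard ?_ (Set.toFinite _)).trans
    (Set.ncard_image_le (f := Prod.snd) (Set.toFinite _))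
  rintro q ⟨-, u, hu, v, hv, he⟩
  refine ⟨(u, q), (mk_mem_cutEdges_iff _ _).2 ⟨splitAug_adj_inl_inr.2 ?_, ?_⟩, rfl⟩
  · rw [he]; exact Sym2.mem_mk_left u v
  · exact iff_of_true hu fun h => hv (h v (by rw [he]; exact Sym2.mem_mk_right u v))

end SplitAug

theorem stmt3 {V : Type*} [Fintype V] (G : SimpleGraph V)
    (hn : 2 ≤ Fintype.card V) (k : ℕ) (hk : 2 < k) :
    (∃ S : Set V, k ≤ (cutEdges G S).ncard) ↔
      (∃ S₁' S₂' : Set (V ⊕ (G.edgeSet × Fin ((Fintype.card V) ^ 3))),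
        S₁' ∪ S₂' = Set.univ ∧ S₁' ∩ S₂' = ∅ ∧
        S₁'.Nonempty ∧ S₂'.Nonempty ∧
        ((splitAug G).induce S₁').Connected ∧ ((splitAug G).induce S₂').Connected ∧
        k * (Fintype.card V) ^ 3 ≤ (cutEdges (splitAug G) S₁').ncard) := by
  constructor
  · rintro ⟨S, hS⟩
    obtain ⟨-, -, u, hu, v, hv, -⟩ :=
      Set.nonempty_of_ncard_ne_zero (s := cutEdges G S) (by omega)
    have hT := copiesAnchored_splitAugLift (G := G) S
    refine ⟨splitAugLift S, (splitAugLift S)ᶜ, Set.union_compl_self _, Set.inter_compl_self _,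
      ⟨Sum.inl u, hu⟩, ⟨Sum.inl v, hv⟩, hT.connected_induce hu,
      hT.compl.connected_induce (u := v) hv, ?_⟩
    calc k * Fintype.card V ^ 3 ≤ (cutEdges G S).ncard * Fintype.card V ^ 3 :=
          Nat.mul_le_mul_right _ hS
      _ ≤ (crossings (splitAug G) (splitAugLift S)).ncard :=
          ncard_cutEdges_mul_le_ncard_crossings_splitAugLift S
      _ ≤ _ := ncard_crossings_le_ncard_cutEdges _ _
  · rintro ⟨T, T', huniv, hdisj, -, -, h₁, h₂, hcut⟩
    obtain rfl : T' = Tᶜ := (IsCompl.of_eq hdisj huniv).compl_eq.symm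
    have hsq : Fintype.card V ^ 2 < Fintype.card V ^ 3 := Nat.pow_lt_pow_right hn (by norm_num)
    have hT := copiesAnchored_of_connected h₁ h₂ (by nlinarith)
    refine ⟨Sum.inl ⁻¹' T, Nat.le_of_not_lt fun hlt => ?_⟩
    have hcut' := ncard_cutEdges_le_of_forall_not_adj_inr (splitAug G) T splitAug_not_adj_inr_inr
    rw [Nat.card_eq_fintype_card] at hcut'
    have hk' := Nat.mul_le_mul_right (Fintype.card V ^ 3) (Nat.lt_iff_add_one_le.1 hlt)
    linarith [hT.ncard_crossings_le]
end

section
/- Let n ≥ 1 be an integer, let X be a set with |X| = 3n, and let F₁,…,F_m ⊆ X be subsets each of size exactly 3 such that every element x ∈ X belongs to at least 3(n+2) of the sets F_i. Set M = 3n+1 and let G be the Exact-3-Cover gadget graph built from this data. Then there exists F' ⊆ {1,…,m} such that every element of X belongs to F_i for exactly one i ∈ F', if and only if G has a connected cut of size at least (m−n)² + 3m − 3n + (m−2n)·M, i.e., there exists a nonempty set S of vertices of G such that the induced subgraph G[S] is connected and at least (m−n)² + 3m − 3n + (m−2n)·M edges of G have exactly one endpoint in S. -/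
/-- The vertex set of the Exact-3-Cover gadget graph: the clique vertices
`u₁, …, u_{2(m−n)}` (0-indexed), the ground set `X`, and the pendant sets
`Y_{m+1}, …, Y_{2(m−n)}`, each of size `M` (indexed by `Fin (m − 2n) × Fin M`). -/
abbrev XCVert (n m M : ℕ) (X : Type*) : Type _ :=
  Fin (2 * (m - n)) ⊕ (X ⊕ (Fin (m - 2 * n) × Fin M))

/-- The Exact-3-Cover gadget graph: `U` is a clique, `u_i` (for `i < m`, 0-indexed) is
adjacent to exactly the elements of `F i`, and `u_{m+j}` is adjacent to exactly the `M`
vertices of the pendant block `Y_j`; `X ∪ Y` is an independent set. -/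
def xcGadget (n m M : ℕ) (X : Type*) (F : ℕ → Finset X) :
    SimpleGraph (XCVert n m M X) :=
  SimpleGraph.fromRel (fun a b =>
    (∃ i j : Fin (2 * (m - n)), a = Sum.inl i ∧ b = Sum.inl j) ∨
    (∃ (i : Fin (2 * (m - n))) (x : X),
      a = Sum.inl i ∧ b = Sum.inr (Sum.inl x) ∧ (i : ℕ) < m ∧ x ∈ F (i : ℕ)) ∨
    (∃ (i : Fin (2 * (m - n))) (p : Fin (m - 2 * n) × Fin M),
      a = Sum.inl i ∧ b = Sum.inr (Sum.inr p) ∧ (i : ℕ) = m + (p.1 : ℕ)))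

/-!
Write `K = m − n` and let `S` be a connected vertex set. Its cut consists of the clique edges,
`a (2K − a) ≤ K²` of them where `a = |S ∩ U|`; the edges at each `x ∈ X`, of which there are
`|{i < m : x ∈ F i}|` minus the number of sets containing `x` whose vertex lies on `x`'s side; and,
for each pendant block `Y_j`, at most `M` edges, exactly `M` when its hub `u_{m+j}` is in `S` and
`Y_j` is not.

An exact cover `F'` gives `S = {u_i : i ∈ F'} ∪ {u_i : i ≥ m} ∪ X`, where every term is maximal
except that each `x` keeps exactly one of its edges inside `S`. Conversely, a connected `S` that is
not a single vertex of `X ∪ Y` (which has at most `2K` edges) contains the hub of each of its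
pendant vertices and, for each of its `x ∈ X`, some `u_i` with `x ∈ F i`. A hub missing from `S`
costs `M = 3n + 1` edges, while the edges at `X` exceed their share `3m − 3n` by at most `3n`; so
all hubs are in `S`. The clique term then allows at most `3n + 1` chosen sets `u_i ∈ S`, `i < m`,
so an `x ∉ S` would lose at least `5` of its `≥ 3n + 6` edges. Hence `X ⊆ S`, and a total loss of
at most `3n` over the `3n` elements forces every `x` into exactly one chosen set.
-/

open Finset

namespace SimpleGraph

variable {V : Type*} {G : SimpleGraph V} {S : Set V}

open Classical in
lemma ncard_cutEdges_eq_sum [Fintype V] :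
    (cutEdges G S).ncard = ∑ v, ∑ w, if v ∈ S ∧ w ∉ S ∧ G.Adj v w then 1 else 0 := by
  have himg : cutEdges G S =
      (fun p : V × V => s(p.1, p.2)) '' {p | p.1 ∈ S ∧ p.2 ∉ S ∧ G.Adj p.1 p.2} := by
    ext e
    constructor
    · rintro ⟨he, u, hu, v, hv, rfl⟩
      exact ⟨(u, v), ⟨hu, hv, he⟩, rfl⟩
    · rintro ⟨⟨u, v⟩, ⟨hu, hv, hadj⟩, rfl⟩
      exact ⟨hadj, u, hu, v, hv, rfl⟩
  have hinj : Set.InjOn (fun p : V × V => s(p.1, p.2))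
      {p | p.1 ∈ S ∧ p.2 ∉ S ∧ G.Adj p.1 p.2} := by
    rintro ⟨u, v⟩ ⟨hu, hv, -⟩ ⟨u', v'⟩ ⟨hu', -, -⟩ h
    rcases Sym2.eq_iff.mp h with ⟨rfl, rfl⟩ | ⟨rfl, rfl⟩
    · rfl
    · exact absurd hu' hv
  rw [himg, hinj.ncard_image, Set.ncard_eq_toFinset_card', Set.toFinset_ofPred, card_filter,
    Fintype.sum_prod_type]

lemma cutEdges_singleton (v : V) : cutEdges G {v} = G.incidenceSet v := by
  ext e
  constructor
  · rintro ⟨he, u, rfl, w, -, rfl⟩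
    exact ⟨he, Sym2.mem_mk_left _ _⟩
  · rintro ⟨he, hv⟩
    obtain ⟨w, rfl⟩ := Sym2.mem_iff_exists.mp hv
    exact ⟨he, v, rfl, w, (G.ne_of_adj he).symm, rfl⟩

lemma ncard_cutEdges_singleton [Fintype V] [DecidableEq V] [DecidableRel G.Adj] (v : V) :
    (cutEdges G {v}).ncard = G.degree v := by
  rw [cutEdges_singleton, ← card_incidenceSet_eq_degree, Set.ncard_eq_toFinset_card',
    Set.toFinset_card]

lemma Connected.exists_adj_of_ne_singleton (h : (G.induce S).Connected) {v : V} (hv : v ∈ S)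
    (hS : S ≠ {v}) : ∃ w ∈ S, G.Adj v w := by
  have : Nontrivial S := Set.nontrivial_coe_sort.mpr ((Set.nontrivial_iff_ne_singleton hv).mpr hS)
  obtain ⟨w, hw⟩ := h.preconnected.exists_adj_of_nontrivial ⟨v, hv⟩
  exact ⟨w, w.2, hw⟩

end SimpleGraph

lemma Fin.card_filter_val_mem {N : ℕ} {T : Finset ℕ} (hT : T ⊆ range N) :
    #{i : Fin N | (i : ℕ) ∈ T} = #T := by
  rw [← card_map Fin.valEmbedding]
  congr 1
  ext k
  simp only [mem_map, mem_filter, mem_univ, true_and, Fin.valEmbedding_apply]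
  exact ⟨fun ⟨i, hi, hik⟩ => hik ▸ hi, fun hk => ⟨⟨k, mem_range.mp (hT hk)⟩, hk, rfl⟩⟩

lemma eq_one_of_one_le_of_sum_le_card {ι : Type*} [Fintype ι] {f : ι → ℕ} (h1 : ∀ i, 1 ≤ f i)
    (hs : ∑ i, f i ≤ Fintype.card ι) (i : ι) : f i = 1 := by
  have hsum : ∑ _i : ι, 1 = ∑ i, f i :=
    le_antisymm (sum_le_sum fun i _ => h1 i) (by simpa using hs)
  exact ((sum_eq_sum_iff_of_le fun i _ => h1 i).mp hsum i (mem_univ i)).symm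

lemma mul_two_mul_sub_le_sq (a K : ℕ) : a * (2 * K - a) ≤ K ^ 2 := by
  obtain ⟨b, hb⟩ : ∃ b, 2 * K - a = b := ⟨_, rfl⟩
  rw [hb]
  rcases le_total a (2 * K) with h | h
  · have hab : a + b = 2 * K := by omega
    nlinarith [sq_nonneg ((a : ℤ) - K)]
  · simp [show b = 0 by omega]

lemma mul_two_mul_sub_add_sq_le {a K c : ℕ} (ha : a ≤ 2 * K) (hc : K + c ≤ a) :
    a * (2 * K - a) + c ^ 2 ≤ K ^ 2 := by
  obtain ⟨b, hb⟩ : ∃ b, 2 * K - a = b := ⟨_, rfl⟩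
  have hab : a + b = 2 * K := by omega
  rw [hb]
  nlinarith

def IsExactCover {X : Type*} (F : ℕ → Finset X) (m : ℕ) (F' : Finset ℕ) : Prop :=
  F' ⊆ range m ∧ ∀ x, ∃! i, i ∈ F' ∧ x ∈ F i

section SetSystem

variable {X : Type*} [DecidableEq X] {F : ℕ → Finset X} {m : ℕ}

lemma isExactCover_iff {F' : Finset ℕ} :
    IsExactCover F m F' ↔ F' ⊆ range m ∧ ∀ x, #{i ∈ F' | x ∈ F i} = 1 := by
  simp only [IsExactCover, card_eq_one, Finset.ext_iff, mem_filter, mem_singleton]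
  refine and_congr_right fun _ => forall_congr' fun x => ?_
  exact ⟨fun ⟨i, hi, hu⟩ => ⟨i, fun j => ⟨hu j, fun h => h ▸ hi⟩⟩,
    fun ⟨i, hi⟩ => ⟨i, (hi i).2 rfl, fun j => (hi j).1⟩⟩

variable [Fintype X]

lemma sum_card_filter_mem_of_card_eq {k : ℕ} (hF : ∀ i < m, #(F i) = k) {T : Finset ℕ}
    (hT : T ⊆ range m) : ∑ x, #{i ∈ T | x ∈ F i} = k * #T := by
  have := sum_card_bipartiteAbove_eq_sum_card_bipartiteBelow (s := univ) (t := T)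
    (r := fun x i => x ∈ F i)
  simp only [bipartiteAbove, bipartiteBelow, filter_mem_eq_inter, univ_inter] at this
  rw [this, sum_congr rfl fun i hi => hF i (mem_range.mp (hT hi)), sum_const, smul_eq_mul,
    mul_comm]

lemma two_mul_le_of_coverage {n : ℕ} (hX : Fintype.card X = 3 * n) (hF : ∀ i < m, #(F i) = 3)
    (hcov : ∀ x, 3 * (n + 2) ≤ #{i ∈ range m | x ∈ F i}) : 2 * n ≤ m := by
  have h := sum_le_sum fun x (_ : x ∈ univ) => hcov x
  rw [sum_const, card_univ, hX, sum_card_filter_mem_of_card_eq hF subset_rfl, card_range,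
    smul_eq_mul] at h
  nlinarith

end SetSystem

namespace XCGadget

open Sum

variable {n m M : ℕ} {X : Type*} {F : ℕ → Finset X}

local notation "G" => xcGadget n m M X F

@[simp] lemma adj_inl_inl {i j : Fin (2 * (m - n))} : (G).Adj (inl i) (inl j) ↔ i ≠ j := by
  simp [xcGadget]

@[simp] lemma adj_inl_inr_inl {i : Fin (2 * (m - n))} {x : X} :
    (G).Adj (inl i) (inr (inl x)) ↔ (i : ℕ) < m ∧ x ∈ F i := by
  simp [xcGadget]

@[simp] lemma adj_inl_inr_inr {i : Fin (2 * (m - n))} {p : Fin (m - 2 * n) × Fin M} :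
    (G).Adj (inl i) (inr (inr p)) ↔ (i : ℕ) = m + p.1 := by
  simp only [xcGadget, SimpleGraph.fromRel_adj]
  simp

@[simp] lemma adj_inr_inr {a b : X ⊕ (Fin (m - 2 * n) × Fin M)} : ¬ (G).Adj (inr a) (inr b) := by
  simp [xcGadget]

@[simp] lemma adj_inr_inl_inl {i : Fin (2 * (m - n))} {x : X} :
    (G).Adj (inr (inl x)) (inl i) ↔ (i : ℕ) < m ∧ x ∈ F i := by
  rw [SimpleGraph.adj_comm, adj_inl_inr_inl]

@[simp] lemma adj_inr_inr_inl {i : Fin (2 * (m - n))} {p : Fin (m - 2 * n) × Fin M} :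
    (G).Adj (inr (inr p)) (inl i) ↔ (i : ℕ) = m + p.1 := by
  rw [SimpleGraph.adj_comm, adj_inl_inr_inr]

open Classical in
lemma degree_inr_le [Fintype X] (w : X ⊕ (Fin (m - 2 * n) × Fin M)) :
    (G).degree (inr w) ≤ 2 * (m - n) := by
  calc (G).degree (inr w)
      ≤ #(univ.map (Function.Embedding.inl (β := X ⊕ (Fin (m - 2 * n) × Fin M)))) := by
        refine card_le_card fun v hv => ?_
        rw [SimpleGraph.mem_neighborFinset] at hv
        rcases v with i | v
        · exact mem_map_of_mem _ (mem_univ i)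
        · exact absurd hv adj_inr_inr
    _ = 2 * (m - n) := by simp

def hub (j : Fin (m - 2 * n)) : Fin (2 * (m - n)) := ⟨m + j, by omega⟩

@[simp] lemma val_hub (j : Fin (m - 2 * n)) : (hub j : ℕ) = m + j := rfl

lemma hub_injective : Function.Injective (hub (n := n) (m := m)) :=
  fun j j' h => Fin.ext (by simpa using congrArg Fin.val h)

lemma val_eq_add_iff_eq_hub {i : Fin (2 * (m - n))} {j : Fin (m - 2 * n)} :
    (i : ℕ) = m + j ↔ i = hub j := by
  simp [Fin.ext_iff]

section Cut

open scoped Classical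

variable (F) (S : Set (XCVert n m M X))

noncomputable def cliquePart : Finset (Fin (2 * (m - n))) := {i | inl i ∈ S}

noncomputable def chosenSets : Finset ℕ :=
  Finset.map Fin.valEmbedding {i ∈ cliquePart S | (i : ℕ) < m}

noncomputable def hubPart : Finset (Fin (m - 2 * n)) := {j | inl (hub j) ∈ S}

noncomputable def hits [DecidableEq X] (x : X) : ℕ := #{i ∈ chosenSets S | x ∈ F i}

noncomputable def xCut [DecidableEq X] (x : X) : ℕ :=
  if inr (inl x) ∈ S then #{i ∈ range m | x ∈ F i} - hits F S x else hits F S x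

noncomputable def yCut (j : Fin (m - 2 * n)) : ℕ :=
  if inl (hub j) ∈ S then #{l | inr (inr (j, l)) ∉ S} else #{l | inr (inr (j, l)) ∈ S}

variable {F S}

@[simp] lemma mem_cliquePart {i : Fin (2 * (m - n))} : i ∈ cliquePart S ↔ inl i ∈ S := by
  simp [cliquePart]

@[simp] lemma mem_hubPart {j : Fin (m - 2 * n)} : j ∈ hubPart S ↔ inl (hub j) ∈ S := by
  simp [hubPart]

lemma val_mem_chosenSets {i : Fin (2 * (m - n))} :
    (i : ℕ) ∈ chosenSets S ↔ inl i ∈ S ∧ (i : ℕ) < m := by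
  simp [chosenSets, Fin.val_inj]

lemma chosenSets_subset_range : chosenSets S ⊆ range m := by
  intro k hk
  simp only [chosenSets, mem_map, mem_filter, Fin.valEmbedding_apply] at hk
  obtain ⟨i, ⟨-, hi⟩, rfl⟩ := hk
  exact mem_range.mpr hi

lemma card_chosenSets_add_card_hubPart : #(chosenSets S) + #(hubPart S) = #(cliquePart S) := by
  have hhub : (hubPart S).map ⟨hub, hub_injective⟩ =
      ({i ∈ cliquePart S | ¬ (i : ℕ) < m} : Finset (Fin (2 * (m - n)))) := by
    ext i
    simp only [mem_map, mem_hubPart, Function.Embedding.coeFn_mk, mem_filter, mem_cliquePart,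
      not_lt]
    constructor
    · rintro ⟨j, hj, rfl⟩
      exact ⟨hj, by simp⟩
    · rintro ⟨hi, hmi⟩
      have hi' : hub ⟨i - m, by omega⟩ = i := Fin.ext (by simp; omega)
      exact ⟨_, by rwa [hi'], hi'⟩
  rw [chosenSets, card_map, ← card_filter_add_card_filter_not (s := cliquePart S)
    (fun i => (i : ℕ) < m), ← hhub, card_map]

lemma card_hubPart_le : #(hubPart S) ≤ m - 2 * n :=
  (card_le_univ _).trans_eq (Fintype.card_fin _)

lemma card_cliquePart_le : #(cliquePart S) ≤ 2 * (m - n) :=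
  (card_le_univ _).trans_eq (Fintype.card_fin _)

lemma hits_le [DecidableEq X] (x : X) : hits F S x ≤ #{i ∈ range m | x ∈ F i} :=
  card_le_card (filter_subset_filter _ chosenSets_subset_range)

lemma xCut_le [DecidableEq X] (x : X) : xCut F S x ≤ #{i ∈ range m | x ∈ F i} := by
  unfold xCut
  split_ifs
  exacts [Nat.sub_le _ _, hits_le x]

lemma sum_cut_inl_inl :
    (∑ i, ∑ j, if inl i ∈ S ∧ inl j ∉ S ∧ (G).Adj (inl i) (inl j) then 1 else 0) =
      #(cliquePart S) * (2 * (m - n) - #(cliquePart S)) := by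
  have key : ∀ i j : Fin (2 * (m - n)),
      (if inl i ∈ S ∧ inl j ∉ S ∧ (G).Adj (inl i) (inl j) then 1 else 0) =
        (if i ∈ cliquePart S then 1 else 0) * (if j ∈ (cliquePart S)ᶜ then 1 else 0) := by
    intro i j
    by_cases hi : inl i ∈ S <;> by_cases hj : inl j ∈ S <;> simp [hi, hj]
    rintro rfl
    exact hj hi
  simp only [key, ← sum_mul_sum, sum_boole, filter_mem_eq_inter, univ_inter, Nat.cast_id,
    card_compl, Fintype.card_fin]

lemma sum_cut_inl_inr_inl [Fintype X] [DecidableEq X] (hm : 2 * n ≤ m) :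
    (∑ i, ∑ x, if inl i ∈ S ∧ inr (inl x) ∉ S ∧ (G).Adj (inl i) (inr (inl x)) then 1 else 0) =
      ∑ x, if inr (inl x) ∈ S then 0 else hits F S x := by
  rw [sum_comm]
  refine sum_congr rfl fun x _ => ?_
  split_ifs with hx
  · simp [hx]
  · simp only [hx, not_false_eq_true, true_and, adj_inl_inr_inl, sum_boole, Nat.cast_id]
    rw [hits, ← Fin.card_filter_val_mem (N := 2 * (m - n)) ((filter_subset _ _).trans
      (chosenSets_subset_range.trans (range_subset_range.mpr (by omega))))]
    congr 1
    ext i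
    simp [val_mem_chosenSets, and_assoc]

lemma sum_cut_inr_inl_inl [Fintype X] [DecidableEq X] (hm : 2 * n ≤ m) :
    (∑ x, ∑ i, if inr (inl x) ∈ S ∧ inl i ∉ S ∧ (G).Adj (inr (inl x)) (inl i) then 1 else 0) =
      ∑ x, if inr (inl x) ∈ S then #{i ∈ range m | x ∈ F i} - hits F S x else 0 := by
  refine sum_congr rfl fun x _ => ?_
  split_ifs with hx
  · have hsub : {i ∈ chosenSets S | x ∈ F i} ⊆ {i ∈ range m | x ∈ F i} :=
      filter_subset_filter _ chosenSets_subset_range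
    simp only [hx, true_and, adj_inr_inl_inl, sum_boole, Nat.cast_id]
    rw [hits, ← card_sdiff_of_subset hsub, ← Fin.card_filter_val_mem (N := 2 * (m - n))
      (sdiff_subset.trans ((filter_subset _ _).trans (range_subset_range.mpr (by omega))))]
    congr 1
    ext i
    simp only [mem_filter, mem_univ, true_and, mem_sdiff, mem_range, val_mem_chosenSets]
    tauto
  · simp [hx]

lemma sum_cut_inl_inr_inr :
    (∑ i, ∑ p, if inl i ∈ S ∧ inr (inr p) ∉ S ∧ (G).Adj (inl i) (inr (inr p)) then 1 else 0) =
      ∑ j, if inl (hub j) ∈ S then #{l | inr (inr (j, l)) ∉ S} else 0 := by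
  rw [sum_comm, Fintype.sum_prod_type]
  refine sum_congr rfl fun j _ => ?_
  have single : ∀ l, (∑ i, if inl i ∈ S ∧ inr (inr (j, l)) ∉ S ∧
      (G).Adj (inl i) (inr (inr (j, l))) then 1 else 0) =
        if inl (hub j) ∈ S ∧ inr (inr (j, l)) ∉ S then 1 else 0 := by
    intro l
    rw [sum_eq_single (hub j)] <;> simp +contextual [val_eq_add_iff_eq_hub]
  simp only [single]
  split_ifs with h <;> simp [h, card_filter]

lemma sum_cut_inr_inr_inl :
    (∑ p, ∑ i, if inr (inr p) ∈ S ∧ inl i ∉ S ∧ (G).Adj (inr (inr p)) (inl i) then 1 else 0) =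
      ∑ j, if inl (hub j) ∈ S then 0 else #{l | inr (inr (j, l)) ∈ S} := by
  rw [Fintype.sum_prod_type]
  refine sum_congr rfl fun j _ => ?_
  have single : ∀ l, (∑ i, if inr (inr (j, l)) ∈ S ∧ inl i ∉ S ∧
      (G).Adj (inr (inr (j, l))) (inl i) then 1 else 0) =
        if inr (inr (j, l)) ∈ S ∧ inl (hub j) ∉ S then 1 else 0 := by
    intro l
    rw [sum_eq_single (hub j)] <;> simp +contextual [val_eq_add_iff_eq_hub]
  simp only [single]
  split_ifs with h <;> simp [h]

theorem ncard_cutEdges_xcGadget [Fintype X] [DecidableEq X] (hm : 2 * n ≤ m) :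
    (cutEdges G S).ncard = #(cliquePart S) * (2 * (m - n) - #(cliquePart S)) +
      ∑ x, xCut F S x + ∑ j, yCut S j := by
  rw [SimpleGraph.ncard_cutEdges_eq_sum]
  simp only [Fintype.sum_sum_type, adj_inr_inr, and_false, if_false, sum_const_zero, add_zero,
    sum_add_distrib]
  rw [sum_cut_inl_inl, sum_cut_inl_inr_inl hm, sum_cut_inl_inr_inr, sum_cut_inr_inl_inl hm,
    sum_cut_inr_inr_inl, add_assoc, add_add_add_comm, ← sum_add_distrib, ← sum_add_distrib,
    ← add_assoc]
  congr 1
  · congr 1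
    exact sum_congr rfl fun x _ => by unfold xCut; split_ifs <;> simp
  · exact sum_congr rfl fun j _ => by unfold yCut; split_ifs <;> simp

section Connected

variable (hS : ((xcGadget n m M X F).induce S).Connected) (hsing : ∀ w, S ≠ {inr w})
include hS hsing

lemma one_le_hits [DecidableEq X] {x : X} (hx : inr (inl x) ∈ S) : 1 ≤ hits F S x := by
  obtain ⟨w, hw, hadj⟩ := hS.exists_adj_of_ne_singleton hx (hsing _)
  rcases w with i | w
  · rw [adj_inr_inl_inl] at hadj
    exact card_pos.mpr ⟨i, mem_filter.mpr ⟨val_mem_chosenSets.mpr ⟨hw, hadj.1⟩, hadj.2⟩⟩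
  · exact absurd hadj adj_inr_inr

lemma hub_mem {j : Fin (m - 2 * n)} {l : Fin M} (hy : inr (inr (j, l)) ∈ S) :
    inl (hub j) ∈ S := by
  obtain ⟨w, hw, hadj⟩ := hS.exists_adj_of_ne_singleton hy (hsing _)
  rcases w with i | w
  · rwa [← val_eq_add_iff_eq_hub.mp (adj_inr_inr_inl.mp hadj)]
  · exact absurd hadj adj_inr_inr

lemma sum_yCut_le : ∑ j, yCut S j ≤ M * #(hubPart S) := by
  calc ∑ j, yCut S j ≤ ∑ j, if inl (hub j) ∈ S then M else 0 := by
        refine sum_le_sum fun j _ => ?_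
        unfold yCut
        split_ifs with h
        · exact (card_filter_le _ _).trans (by simp)
        · simp only [nonpos_iff_eq_zero, card_eq_zero, filter_eq_empty_iff, mem_univ,
            true_implies]
          exact fun l hl => h (hub_mem hS hsing hl)
    _ = M * #(hubPart S) := by simp [hubPart, sum_ite, mul_comm]

lemma ncard_cutEdges_le [Fintype X] [DecidableEq X] (hm : 2 * n ≤ m) :
    (cutEdges G S).ncard ≤ #(cliquePart S) * (2 * (m - n) - #(cliquePart S)) +
      ∑ x, xCut F S x + M * #(hubPart S) := by
  rw [ncard_cutEdges_xcGadget hm]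
  exact Nat.add_le_add_left (sum_yCut_le hS hsing) _

end Connected

lemma ne_singleton_inr [Fintype X] (hm : 2 * n ≤ m) (hn : 1 ≤ n)
    (hcut : (m - n) ^ 2 + (3 * m - 3 * n) ≤ (cutEdges G S).ncard)
    (w : X ⊕ (Fin (m - 2 * n) × Fin M)) : S ≠ {inr w} := by
  rintro rfl
  rw [SimpleGraph.ncard_cutEdges_singleton] at hcut
  have := degree_inr_le (F := F) (M := M) w
  omega

lemma card_bounds_of_le_cut {a a₁ a₂ s : ℕ} (hm : 2 * n ≤ m) (ha : a₁ + a₂ = a)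
    (ha₂ : a₂ ≤ m - 2 * n) (haK : a ≤ 2 * (m - n)) (hs : s ≤ 3 * m)
    (hcut : (m - n) ^ 2 + (3 * m - 3 * n) + (m - 2 * n) * (3 * n + 1) ≤
      a * (2 * (m - n) - a) + s + (3 * n + 1) * a₂) :
    a₁ ≤ 3 * n + 1 ∧ 3 * m ≤ s + 3 * n := by
  obtain ⟨J, rfl⟩ := Nat.exists_eq_add_of_le hm
  rw [show 2 * n + J - n = n + J by omega, show 2 * n + J - 2 * n = J by omega,
    show 3 * (2 * n + J) - 3 * n = 3 * (n + J) by omega] at *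
  have hQ := mul_two_mul_sub_le_sq a (n + J)
  have ha₂J : a₂ = J := by
    by_contra h
    have := Nat.mul_le_mul_left (3 * n + 1) (show a₂ + 1 ≤ J by omega)
    nlinarith
  subst ha₂J
  refine ⟨?_, by nlinarith⟩
  by_contra h
  have := mul_two_mul_sub_add_sq_le (c := 2 * n + 2) haK (by omega)
  nlinarith

theorem isExactCover_chosenSets [Fintype X] [DecidableEq X] (hn : 1 ≤ n)
    (hX : Fintype.card X = 3 * n) (hF : ∀ i < m, #(F i) = 3)
    (hcov : ∀ x, 3 * (n + 2) ≤ #{i ∈ range m | x ∈ F i})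
    {S : Set (XCVert n m (3 * n + 1) X)}
    (hS : ((xcGadget n m (3 * n + 1) X F).induce S).Connected)
    (hcut : (m - n) ^ 2 + (3 * m - 3 * n) + (m - 2 * n) * (3 * n + 1) ≤
      (cutEdges (xcGadget n m (3 * n + 1) X F) S).ncard) :
    IsExactCover F m (chosenSets S) := by
  have hm := two_mul_le_of_coverage hX hF hcov
  have hsing := ne_singleton_inr hm hn (le_trans (by omega) hcut)
  have hdeg : ∑ x, #{i ∈ range m | x ∈ F i} = 3 * m := by
    simpa using sum_card_filter_mem_of_card_eq hF subset_rfl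
  obtain ⟨hchosen, hsum⟩ := card_bounds_of_le_cut hm card_chosenSets_add_card_hubPart
    card_hubPart_le card_cliquePart_le ((sum_le_sum fun x _ => xCut_le x).trans hdeg.le)
    (hcut.trans (ncard_cutEdges_le hS hsing hm))
  have hout : ∀ x, inr (inl x) ∉ S → 5 ≤ #{i ∈ range m | x ∈ F i} - xCut F S x := by
    intro x hx
    have : hits F S x ≤ 3 * n + 1 := (card_filter_le _ _).trans hchosen
    have := hcov x
    rw [xCut, if_neg hx]
    omega
  have hloss := eq_one_of_one_le_of_sum_le_card
    (f := fun x => #{i ∈ range m | x ∈ F i} - xCut F S x) (fun x => by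
      by_cases hx : inr (inl x) ∈ S
      · have := one_le_hits hS hsing hx
        have := hits_le (F := F) (S := S) x
        simp only [xCut, if_pos hx]
        omega
      · exact le_trans (by norm_num) (hout x hx))
    (by rw [sum_tsub_distrib _ fun x _ => xCut_le x, hdeg, hX]; omega)
  refine isExactCover_iff.mpr ⟨chosenSets_subset_range, fun x => ?_⟩
  have hx : inr (inl x) ∈ S := by_contra fun hx => by have := hout x hx; have := hloss x; omega
  have h1 := hloss x
  have h2 := hits_le (F := F) (S := S) x
  rw [xCut, if_pos hx] at h1
  show hits F S x = 1
  omega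

def coverSide (F' : Finset ℕ) : Set (XCVert n m M X)
  | inl i => (i : ℕ) ∈ F' ∨ m ≤ i
  | inr (inl _) => True
  | inr (inr _) => False

variable {F' : Finset ℕ}

@[simp] lemma inl_mem_coverSide {i : Fin (2 * (m - n))} :
    inl i ∈ (coverSide F' : Set (XCVert n m M X)) ↔ (i : ℕ) ∈ F' ∨ m ≤ i := Iff.rfl

@[simp] lemma inr_inl_mem_coverSide {x : X} :
    inr (inl x) ∈ (coverSide F' : Set (XCVert n m M X)) := trivial

@[simp] lemma inr_inr_notMem_coverSide {p : Fin (m - 2 * n) × Fin M} :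
    inr (inr p) ∉ (coverSide F' : Set (XCVert n m M X)) := id

lemma chosenSets_coverSide (hm : 2 * n ≤ m) (hF' : F' ⊆ range m) :
    chosenSets (coverSide F' : Set (XCVert n m M X)) = F' := by
  ext k
  simp only [chosenSets, mem_map, mem_filter, mem_cliquePart, inl_mem_coverSide,
    Fin.valEmbedding_apply]
  constructor
  · rintro ⟨i, ⟨hi | hi, him⟩, rfl⟩
    exacts [hi, absurd him (not_lt.mpr hi)]
  · intro hk
    have := mem_range.mp (hF' hk)
    exact ⟨⟨k, by omega⟩, ⟨Or.inl hk, this⟩, rfl⟩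

lemma hubPart_coverSide : hubPart (coverSide F' : Set (XCVert n m M X)) = univ := by
  ext j
  simp

lemma connected_induce_coverSide [DecidableEq X] (hm : 2 * n ≤ m) (hF' : IsExactCover F m F')
    (hne : F'.Nonempty) : ((G).induce (coverSide F')).Connected := by
  have hlt : ∀ i ∈ F', i < 2 * (m - n) := fun i hi => by
    have := mem_range.mp (hF'.1 hi)
    omega
  obtain ⟨i₀, hi₀⟩ := hne
  let c : (coverSide F' : Set (XCVert n m M X)) := ⟨inl ⟨i₀, hlt i₀ hi₀⟩, Or.inl hi₀⟩
  have hclique : ∀ i (hi : inl i ∈ (coverSide F' : Set (XCVert n m M X))),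
      ((G).induce (coverSide F')).Reachable c ⟨inl i, hi⟩ := by
    intro i hi
    by_cases h : (⟨i₀, hlt i₀ hi₀⟩ : Fin _) = i
    · subst h
      rfl
    · exact SimpleGraph.Adj.reachable (adj_inl_inl.mpr h)
  refine (SimpleGraph.connected_iff_exists_forall_reachable _).mpr ⟨c, ?_⟩
  rintro ⟨i | x | p, hv⟩
  · exact hclique i hv
  · obtain ⟨i, ⟨hi, hxi⟩, -⟩ := hF'.2 x
    exact (hclique ⟨i, hlt i hi⟩ (Or.inl hi)).trans
      (SimpleGraph.Adj.reachable (adj_inl_inr_inl.mpr ⟨mem_range.mp (hF'.1 hi), hxi⟩))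
  · exact hv.elim

lemma ncard_cutEdges_coverSide [Fintype X] [DecidableEq X] (hX : Fintype.card X = 3 * n)
    (hF : ∀ i < m, #(F i) = 3) (hm : 2 * n ≤ m) (hF' : IsExactCover F m F') (hcard : #F' = n) :
    (cutEdges G (coverSide F')).ncard = (m - n) ^ 2 + (3 * m - 3 * n) + (m - 2 * n) * M := by
  set S : Set (XCVert n m M X) := coverSide F'
  have hchosen : chosenSets S = F' := chosenSets_coverSide hm hF'.1
  have hclique : #(cliquePart S) = m - n := by
    rw [← card_chosenSets_add_card_hubPart, hchosen, hubPart_coverSide, card_univ,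
      Fintype.card_fin, hcard]
    omega
  have hxCut : ∀ x, xCut F S x + 1 = #{i ∈ range m | x ∈ F i} := by
    intro x
    have hhits : hits F S x = 1 := by
      rw [hits, hchosen]
      exact (isExactCover_iff.mp hF').2 x
    have := hits_le (F := F) (S := S) x
    rw [xCut, if_pos inr_inl_mem_coverSide]
    omega
  have hdeg := sum_card_filter_mem_of_card_eq hF (subset_refl (range m))
  simp only [← hxCut, sum_add_distrib, sum_const, card_univ, hX, card_range, smul_eq_mul] at hdeg
  have hyCut : ∀ j, yCut S j = M := by
    simp [S, yCut]
  rw [ncard_cutEdges_xcGadget hm, hclique, sum_congr rfl fun j _ => hyCut j, sum_const,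
    card_univ, Fintype.card_fin, smul_eq_mul, show 2 * (m - n) - (m - n) = m - n by omega, sq]
  omega

theorem exists_connected_cut_of_isExactCover [Fintype X] [DecidableEq X] (hn : 1 ≤ n)
    (hX : Fintype.card X = 3 * n) (hF : ∀ i < m, #(F i) = 3) (hm : 2 * n ≤ m)
    (hF' : IsExactCover F m F') :
    ∃ S : Set (XCVert n m M X), S.Nonempty ∧ ((G).induce S).Connected ∧
      (m - n) ^ 2 + (3 * m - 3 * n) + (m - 2 * n) * M ≤ (cutEdges G S).ncard := by
  have hcard : #F' = n := by
    have := sum_card_filter_mem_of_card_eq hF hF'.1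
    simp only [(isExactCover_iff.mp hF').2, sum_const, card_univ, hX, smul_eq_mul] at this
    omega
  obtain ⟨x⟩ : Nonempty X := Fintype.card_pos_iff.mp (by omega)
  exact ⟨coverSide F', ⟨inr (inl x), trivial⟩,
    connected_induce_coverSide hm hF' (card_pos.mp (by omega)),
    (ncard_cutEdges_coverSide hX hF hm hF' hcard).ge⟩

end Cut

end XCGadget

theorem stmt5 (n m : ℕ) (hn : 1 ≤ n)
    (X : Type*) [Fintype X] [DecidableEq X] (hX : Fintype.card X = 3 * n)
    (F : ℕ → Finset X) (hF : ∀ i < m, (F i).card = 3)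
    (hcov : ∀ x : X, 3 * (n + 2) ≤ ((Finset.range m).filter (fun i => x ∈ F i)).card) :
    (∃ F' : Finset ℕ, F' ⊆ Finset.range m ∧ ∀ x : X, ∃! i, i ∈ F' ∧ x ∈ F i) ↔
      (∃ S : Set (XCVert n m (3 * n + 1) X), S.Nonempty ∧
        ((xcGadget n m (3 * n + 1) X F).induce S).Connected ∧
        (m - n) ^ 2 + (3 * m - 3 * n) + (m - 2 * n) * (3 * n + 1) ≤
          (cutEdges (xcGadget n m (3 * n + 1) X F) S).ncard) := by
  refine ⟨fun ⟨F', hF'⟩ => ?_, fun ⟨S, _, hS, hcut⟩ => ⟨XCGadget.chosenSets S, ?_⟩⟩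
  · exact XCGadget.exists_connected_cut_of_isExactCover hn hX hF
      (two_mul_le_of_coverage hX hF hcov) hF'
  · exact XCGadget.isExactCover_chosenSets hn hX hF hcov hS hcut
end

section
/- Let G = (V,E) be a finite simple graph with V nonempty and fix a vertex v₀ ∈ V. Then G is connected if and only if the number of subsets S ⊆ V such that v₀ ∈ S and no edge of G has one endpoint in S and the other endpoint in V∖S is odd. -/
theorem stmt8 {V : Type*} [Fintype V] [Nonempty V] (G : SimpleGraph V) (v₀ : V) :
    G.Connected ↔
      Odd {S : Set V | v₀ ∈ S ∧ ¬∃ u v, G.Adj u v ∧ u ∈ S ∧ v ∉ S}.ncard := by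
  classical
  set A : Set (Set V) := {S : Set V | v₀ ∈ S ∧ ¬∃ u v, G.Adj u v ∧ u ∈ S ∧ v ∉ S} with hA
  have hclosed : ∀ S ∈ A, ∀ u v : V, G.Reachable u v → u ∈ S → v ∈ S := by
    intro S hS u v huv hu
    obtain ⟨p⟩ := huv
    induction p with
    | nil => exact hu
    | @cons a b c h q ih =>
      apply ih
      by_contra hb
      exact hS.2 ⟨_, _, h, hu, hb⟩
  constructor
  · intro hG
    have hAeq : A = {Set.univ} := by
      ext S
      simp only [Set.mem_singleton_iff]
      constructor
      · intro hS
        ext v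
        simp only [Set.mem_univ, iff_true]
        exact hclosed S hS v₀ v (hG.preconnected v₀ v) hS.1
      · rintro rfl
        refine ⟨trivial, ?_⟩
        rintro ⟨u, v, -, -, hv⟩
        exact hv trivial
    rw [hAeq]
    simp
  · intro hodd
    by_contra hnc
    have hex : ∃ w, ¬ G.Reachable v₀ w := by
      by_contra h
      push_neg at h
      exact hnc ⟨fun u v => (h u).symm.trans (h v)⟩
    obtain ⟨w, hw⟩ := hex
    set C : Set V := {x | G.Reachable w x} with hC
    have hwC : w ∈ C := Set.mem_setOf.mpr (SimpleGraph.Reachable.refl w)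
    have hv₀C : v₀ ∉ C := fun h => hw h.symm
    have hCclosed : ∀ u v : V, G.Adj u v → u ∈ C → v ∈ C := by
      intro u v h hu
      exact hu.trans h.reachable
    set t : Set V → Set V := fun S => (S \ C) ∪ (C \ S) with ht
    have hmem : ∀ (S : Set V) (x : V), x ∈ t S ↔ ¬(x ∈ S ↔ x ∈ C) := by
      intro S x
      simp only [ht, Set.mem_union, Set.mem_diff]
      tauto
    have htt : Function.Involutive t := by
      intro S
      ext x
      rw [hmem, hmem]
      by_cases hx : x ∈ C <;> by_cases hy : x ∈ S <;> tauto
    have htA : ∀ S ∈ A, t S ∈ A := by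
      intro S hS
      constructor
      · rw [hmem]; have := hS.1; tauto
      · rintro ⟨u, v, h, hu, hv⟩
        have hSu : u ∈ S ↔ v ∈ S :=
          ⟨hclosed S hS u v h.reachable, hclosed S hS v u h.symm.reachable⟩
        have hCu : u ∈ C ↔ v ∈ C := ⟨hCclosed u v h, hCclosed v u h.symm⟩
        rw [hmem] at hu hv
        tauto
    set A₁ : Set (Set V) := A ∩ {S | w ∈ S} with hA₁
    set A₂ : Set (Set V) := A ∩ {S | w ∉ S} with hA₂
    have himg : t '' A₁ = A₂ := by
      ext S
      constructor
      · rintro ⟨T, ⟨hTA, hTw⟩, rfl⟩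
        refine ⟨htA T hTA, ?_⟩
        rw [Set.mem_setOf_eq, hmem]
        tauto
      · rintro ⟨hSA, hSw⟩
        refine ⟨t S, ⟨htA S hSA, ?_⟩, htt S⟩
        rw [Set.mem_setOf_eq, hmem]
        tauto
    have hsplit : A = A₁ ∪ A₂ := by
      ext S
      simp only [hA₁, hA₂, Set.mem_union, Set.mem_inter_iff, Set.mem_setOf_eq]
      tauto
    have hdisj : Disjoint A₁ A₂ := by
      rw [Set.disjoint_left]
      rintro S ⟨-, h1⟩ ⟨-, h2⟩
      exact h2 h1
    have hcard : A.ncard = A₁.ncard + A₂.ncard := by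
      rw [hsplit]
      exact Set.ncard_union_eq hdisj (Set.toFinite _) (Set.toFinite _)
    have hc2 : A₂.ncard = A₁.ncard := by
      rw [← himg, Set.ncard_image_of_injective _ htt.injective]
    rw [hcard, hc2] at hodd
    exact (Nat.not_even_iff_odd.mpr hodd) ⟨_, rfl⟩
end

section
/- Let G = (V,E) be a connected finite simple graph with |V| ≥ 3, and let T be a spanning tree of G (a connected acyclic spanning subgraph of G). Suppose T has at least k leaves, where a leaf is a vertex of degree exactly 1 in T. Then the set S of internal vertices of T (vertices of degree at least 2 in T) is nonempty, the induced subgraph G[S] is connected, and at least k edges of G have exactly one endpoint in S. In particular, G has a connected cut of size at least k. -/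
open SimpleGraph

/-- If `v` and `u` only have each other as possible neighbors, everything reachable
from a vertex of `{v, u}` lies in `{v, u}`. -/
private lemma confine_aux {V : Type*} {T : SimpleGraph V} {v u : V}
    (hv : T.neighborSet v ⊆ {u}) (hu : T.neighborSet u ⊆ {v}) :
    ∀ {a w : V}, T.Walk a w → a ∈ ({v, u} : Set V) → w ∈ ({v, u} : Set V) := by
  intro a w p
  induction p with
  | nil => exact id
  | @cons a b w h q ih =>
    intro ha
    simp only [Set.mem_insert_iff, Set.mem_singleton_iff] at ha
    rcases ha with rfl | rfl
    · have hb : b = u := hv h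
      exact ih (by simp [hb])
    · have hb : b = v := hu h
      exact ih (by simp [hb])

/-- A set with at most one element containing `u` is `{u}`. -/
private lemma eq_singleton_of_ncard_le_one {V : Type*} {s : Set V} (hfin : s.Finite)
    (h1 : s.ncard ≤ 1) {u : V} (hu : u ∈ s) : s = {u} := by
  rw [Set.eq_singleton_iff_unique_mem]
  refine ⟨hu, fun x hx => ?_⟩
  by_contra hxu
  have : 1 < s.ncard := (Set.one_lt_ncard_iff hfin).2 ⟨x, u, hx, hu, hxu⟩
  omega

/-- In a connected graph on at least 3 vertices, any vertex of degree ≤ 1 has all its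
neighbors of degree ≥ 2. -/
private lemma neighbor_big {V : Type*} [Fintype V] {T : SimpleGraph V}
    (hTconn : T.Connected) (hcard : 3 ≤ Fintype.card V) {v u : V}
    (hadj : T.Adj v u) (hv : (T.neighborSet v).ncard ≤ 1) :
    2 ≤ (T.neighborSet u).ncard := by
  by_contra hu
  push_neg at hu
  have hvs : T.neighborSet v = {u} :=
    eq_singleton_of_ncard_le_one (Set.toFinite _) hv hadj
  have hus : T.neighborSet u = {v} :=
    eq_singleton_of_ncard_le_one (Set.toFinite _) (by omega) hadj.symm
  have hall : ∀ w, w ∈ ({v, u} : Set V) := by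
    intro w
    obtain ⟨p⟩ := hTconn.preconnected v w
    exact confine_aux hvs.le hus.le p (by simp)
  have h1 : (Set.univ : Set V).ncard ≤ ({v, u} : Set V).ncard :=
    Set.ncard_le_ncard (fun w _ => hall w) (Set.toFinite _)
  rw [Set.ncard_univ, Nat.card_eq_fintype_card] at h1
  have h2 : ({v, u} : Set V).ncard ≤ 2 := by
    have := Set.ncard_insert_le v ({u} : Set V)
    simpa [Set.ncard_singleton] using this
  omega

/-- Every vertex has a neighbor in a connected graph with at least 2 vertices. -/
private lemma exists_neighbor {V : Type*} [Fintype V] {T : SimpleGraph V}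
    (hTconn : T.Connected) (hcard : 2 ≤ Fintype.card V) (v : V) :
    ∃ u, T.Adj v u := by
  obtain ⟨w, hw⟩ := Fintype.exists_ne_of_one_lt_card (by omega) v
  obtain ⟨p⟩ := hTconn.preconnected v w
  cases p with
  | nil => exact absurd rfl hw.symm
  | cons h q => exact ⟨_, h⟩

/-- Internal vertices of a path have degree at least 2. -/
private lemma internal_deg {V : Type*} [Fintype V] {T : SimpleGraph V} :
    ∀ {u v : V} (p : T.Walk u v), p.IsPath → ∀ w ∈ p.support, w ≠ u → w ≠ v →
      2 ≤ (T.neighborSet w).ncard := by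
  intro u v p
  induction p with
  | nil =>
    intro _ w hw hwu _
    simp only [SimpleGraph.Walk.support_nil, List.mem_singleton] at hw
    exact absurd hw hwu
  | @cons a b v h q ih =>
    intro hp w hw hwu hwv
    simp only [SimpleGraph.Walk.support_cons, List.mem_cons] at hw
    rcases hw with rfl | hw
    · exact absurd rfl hwu
    · cases q with
      | nil =>
        simp only [SimpleGraph.Walk.support_nil, List.mem_singleton] at hw
        exact absurd hw hwv
      | @cons b c v h' q' =>
        by_cases hwb : w = b
        · subst hwb
          have hnd := hp.support_nodup
          simp only [SimpleGraph.Walk.support_cons, List.nodup_cons] at hnd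
          have hac : a ≠ c := by
            intro hac
            apply hnd.1
            rw [hac]
            exact List.mem_cons_of_mem _ q'.start_mem_support
          have hsub : ({a, c} : Set V) ⊆ T.neighborSet w := by
            intro x hx
            simp only [Set.mem_insert_iff, Set.mem_singleton_iff] at hx
            rcases hx with rfl | rfl
            · exact h.symm
            · exact h'
          calc 2 = ({a, c} : Set V).ncard := (Set.ncard_pair hac).symm
            _ ≤ (T.neighborSet w).ncard := Set.ncard_le_ncard hsub (Set.toFinite _)
        · exact ih hp.of_cons w hw hwb hwv

/-- A walk whose support lies in `S` gives reachability in the induced subgraph. -/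
private lemma induce_reach {V : Type*} {T : SimpleGraph V} {S : Set V} :
    ∀ {u v : V} (p : T.Walk u v), (∀ w ∈ p.support, w ∈ S) →
      ∀ (hu : u ∈ S) (hv : v ∈ S),
      (T.induce S).Reachable ⟨u, hu⟩ ⟨v, hv⟩ := by
  intro u v p
  induction p with
  | nil => intro _ hu hv; exact SimpleGraph.Reachable.refl _
  | @cons a b v h q ih =>
    intro hsup hu hv
    have hb : b ∈ S := hsup b (by simp)
    have hadj : (T.induce S).Adj ⟨a, hu⟩ ⟨b, hb⟩ := by
      simp only [SimpleGraph.comap_adj, Function.Embedding.coe_subtype]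
      exact h
    exact hadj.reachable.trans (ih (fun w hw => hsup w (by simp [hw])) hb hv)

theorem stmt9 {V : Type*} [Fintype V] (G : SimpleGraph V) (hG : G.Connected)
    (hcard : 3 ≤ Fintype.card V)
    (T : SimpleGraph V) (hTG : T ≤ G) (hTconn : T.Connected) (hTacyc : T.IsAcyclic)
    (k : ℕ) (hleaves : k ≤ {v : V | (T.neighborSet v).ncard = 1}.ncard)
    (S : Set V) (hS : S = {v : V | 2 ≤ (T.neighborSet v).ncard}) :
    S.Nonempty ∧ (G.induce S).Connected ∧ k ≤ (cutEdges G S).ncard := by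
  classical
  subst hS
  set S : Set V := {v : V | 2 ≤ (T.neighborSet v).ncard} with hSdef
  -- S is nonempty
  have hne : S.Nonempty := by
    have : Nonempty V := Fintype.card_pos_iff.mp (by omega)
    obtain ⟨v⟩ := this
    by_cases hv : 2 ≤ (T.neighborSet v).ncard
    · exact ⟨v, hv⟩
    · obtain ⟨u, hu⟩ := exists_neighbor hTconn (by omega) v
      exact ⟨u, neighbor_big hTconn hcard hu (by omega)⟩
  refine ⟨hne, ?_, ?_⟩
  -- connectivity of the induced graph
  · have hTind : (T.induce S).Connected := by
      haveI : Nonempty ↑S := hne.to_subtype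
      apply SimpleGraph.Connected.mk
      rintro ⟨u, hu⟩ ⟨v, hv⟩
      obtain ⟨w⟩ := hTconn.preconnected u v
      let p := w.toPath
      have hsup : ∀ x ∈ (p : T.Walk u v).support, x ∈ S := by
        intro x hx
        by_cases hxu : x = u
        · exact hxu ▸ hu
        by_cases hxv : x = v
        · exact hxv ▸ hv
        exact internal_deg _ p.2 x hx hxu hxv
      exact induce_reach _ hsup hu hv
    refine hTind.mono ?_
    intro a b hab
    simp only [SimpleGraph.comap_adj, Function.Embedding.coe_subtype] at hab ⊢
    exact hTG hab
  -- counting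
  · set L : Set V := {v : V | (T.neighborSet v).ncard = 1} with hLdef
    set f : V → Sym2 V := fun v =>
      if h : ∃ u, T.neighborSet v = {u} then s(h.choose, v) else s(v, v) with hfdef
    have hkey : ∀ v ∈ L, ∃ u, f v = s(u, v) ∧ T.Adj v u ∧ u ∈ S := by
      intro v hv
      have h1 : (T.neighborSet v).ncard = 1 := hv
      have h : ∃ u, T.neighborSet v = {u} := Set.ncard_eq_one.mp h1
      have hmem : h.choose ∈ T.neighborSet v :=
        ((Set.ext_iff.mp h.choose_spec h.choose).mpr rfl)
      refine ⟨h.choose, ?_, hmem, ?_⟩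
      · simp only [hfdef, dif_pos h]
      · exact neighbor_big hTconn hcard (hmem : T.Adj v h.choose) (by omega)
    have hvnotS : ∀ v ∈ L, v ∉ S := by
      intro v hv hvS
      have h1 : (T.neighborSet v).ncard = 1 := hv
      have h2 : 2 ≤ (T.neighborSet v).ncard := hvS
      omega
    have hmaps : ∀ v ∈ L, f v ∈ cutEdges G S := by
      intro v hv
      obtain ⟨u, hfu, hadj, huS⟩ := hkey v hv
      rw [hfu]
      exact ⟨hTG hadj.symm, u, huS, v, hvnotS v hv, rfl⟩
    have hinj : Set.InjOn f L := by
      intro v1 hv1 v2 hv2 heq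
      obtain ⟨u1, hfu1, _, hu1S⟩ := hkey v1 hv1
      obtain ⟨u2, hfu2, _, hu2S⟩ := hkey v2 hv2
      rw [hfu1, hfu2, Sym2.eq_iff] at heq
      rcases heq with ⟨_, h⟩ | ⟨h1, h2⟩
      · exact h
      · exfalso
        apply hvnotS v2 hv2
        rw [← h1]
        exact hu1S
    calc k ≤ L.ncard := hleaves
      _ ≤ (cutEdges G S).ncard :=
        Set.ncard_le_ncard_of_injOn f hmaps hinj (Set.toFinite _)
end
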